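/- arXiv:2603.27334 — 9 statements merged into one kernel-verified Lean document; each statement's English description precedes it below -/
import Mathlib

section
/- Let R be a finite commutative chain ring with maximal ideal ⟨γ⟩, nilpotency index s, and residue field of size q, and set M = q/(q-1). If C ⊆ R^n is a nonzero linear code of rank K (the minimal cardinality of a generating set of C as an R-module), then the minimum homogeneous distance of C satisfies d_Hom(C) ≤ M·(n - K + 1). -/
/-!
Multiplication by `γ` on the code `C` has kernel and cokernel of the same size, and by Nakayama
the rank `K` of `C` is the dimension of `C/γC` over the residue field, so the kernel has `q^K`
elements. Every coordinate of a kernel element is killed by `γ`, hence lies in the `q`-element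
ideal `⟨γ^(s-1)⟩`, so the kernel sits inside the socle of `C`. By pigeonhole two socle words
agree on some `K - 1` coordinates; their difference is a nonzero socle word of Hamming weight at
most `n - K + 1`, and on socle words the homogeneous weight is exactly `M` times the Hamming
weight.
-/

open scoped BigOperators Classical

/-- The normalized homogeneous weight on a finite chain ring with maximal ideal `⟨γ⟩`,
nilpotency index `s` and residue field of size `q`. -/
noncomputable def wtHom {R : Type*} [CommRing R] (γ : R) (s q : ℕ) (x : R) : ℚ :=
  if x = 0 then 0
  else if x ∈ Ideal.span {γ ^ (s - 1)} then (q : ℚ) / ((q : ℚ) - 1)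
  else 1

/-- Homogeneous weight of a vector: the sum of the weights of its coordinates. -/
noncomputable def wtHomV {R : Type*} [CommRing R] (γ : R) (s q : ℕ) {n : ℕ}
    (v : Fin n → R) : ℚ :=
  ∑ i, wtHom γ s q (v i)

/-- Hamming weight of a vector: the number of nonzero coordinates. -/
noncomputable def hWt {R : Type*} [Zero R] {n : ℕ} (v : Fin n → R) : ℕ :=
  Nat.card {i : Fin n // v i ≠ 0}

/-- `K` is the rank of the code `C`: the least cardinality of a generating set of `C`
as an `R`-module. -/
def IsCodeRank {R : Type*} [CommRing R] {n : ℕ} (C : Submodule R (Fin n → R)) (K : ℕ) : Prop :=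
  IsLeast {k : ℕ | ∃ S : Finset (Fin n → R),
    S.card = k ∧ Submodule.span R (S : Set (Fin n → R)) = C} K

/-- The socle of a code: the codewords all of whose coordinates lie in `⟨γ^(s-1)⟩`. -/
def socleCode {R : Type*} [CommRing R] (γ : R) (s : ℕ) {n : ℕ}
    (C : Submodule R (Fin n → R)) : Submodule R (Fin n → R) :=
  C ⊓ Submodule.pi Set.univ (fun _ : Fin n => Ideal.span {γ ^ (s - 1)})

open IsLocalRing

section HammingWeight

variable {R : Type*} {n : ℕ}

lemma hWt_pos [Zero R] {c : Fin n → R} (hc : c ≠ 0) : 0 < hWt c := by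
  obtain ⟨i, hi⟩ := Function.ne_iff.mp hc
  exact Nat.card_pos_iff.mpr ⟨⟨i, hi⟩, inferInstance⟩

lemma hWt_le_of_forall_mem_eq_zero [Zero R] {c : Fin n → R} (J : Finset (Fin n))
    (hc : ∀ i ∈ J, c i = 0) : hWt c ≤ n - J.card := by
  calc hWt c = (Finset.univ.filter fun i => c i ≠ 0).card := by
        rw [hWt, Nat.card_eq_fintype_card, Fintype.card_subtype]
    _ ≤ Jᶜ.card := Finset.card_le_card fun i hi =>
        Finset.mem_compl.mpr fun hiJ => (Finset.mem_filter.mp hi).2 (hc i hiJ)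
    _ = n - J.card := by rw [Finset.card_compl, Fintype.card_fin]

lemma exists_ne_zero_hWt_le_of_card_lt [Ring R] [Finite R] (S : Submodule R (Fin n → R))
    (I : Submodule R R) (hSI : S ≤ Submodule.pi Set.univ fun _ => I) (k : ℕ)
    (hk : Nat.card I ^ k < Nat.card S) : ∃ c ∈ S, c ≠ 0 ∧ hWt c ≤ n - k := by
  obtain ⟨J, -, hJ⟩ := Finset.exists_subset_card_eq (s := (Finset.univ : Finset (Fin n)))
    (n := min k n) (by simp)
  let restrict : S → (J → I) := fun x j => ⟨x.1 j.1, hSI x.2 j.1 (Set.mem_univ _)⟩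
  have hcard : Nat.card (J → I) < Nat.card S := calc
    Nat.card (J → I) = Nat.card I ^ min k n := by simp [Nat.card_fun, hJ]
    _ ≤ Nat.card I ^ k := Nat.pow_le_pow_right Nat.card_pos (min_le_left _ _)
    _ < Nat.card S := hk
  obtain ⟨x, y, hxy, hne⟩ := Function.not_injective_iff.mp fun h =>
    (Nat.card_le_card_of_injective restrict h).not_gt hcard
  refine ⟨x - y, sub_mem x.2 y.2, sub_ne_zero.mpr (Subtype.coe_ne_coe.mpr hne), ?_⟩
  calc hWt (x.1 - y.1) ≤ n - J.card := hWt_le_of_forall_mem_eq_zero J fun i hi =>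
        sub_eq_zero.mpr (congrArg Subtype.val (congrFun hxy ⟨i, hi⟩))
    _ = n - k := by omega

end HammingWeight

lemma wtHomV_eq_mul_hWt {R : Type*} [CommRing R] (γ : R) (s q : ℕ) {n : ℕ} {c : Fin n → R}
    (hc : c ∈ Submodule.pi Set.univ fun _ => Ideal.span {γ ^ (s - 1)}) :
    wtHomV γ s q c = (q : ℚ) / ((q : ℚ) - 1) * hWt c := by
  calc wtHomV γ s q c
        = ∑ i ∈ Finset.univ.filter fun i => c i ≠ 0, (q : ℚ) / ((q : ℚ) - 1) := by
        rw [Finset.sum_filter]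
        refine Finset.sum_congr rfl fun i _ => ?_
        have hci : c i ∈ Ideal.span {γ ^ (s - 1)} := hc i (Set.mem_univ i)
        by_cases h : c i = 0 <;> simp [wtHom, h, hci]
    _ = (q : ℚ) / ((q : ℚ) - 1) * hWt c := by
        rw [Finset.sum_const, nsmul_eq_mul, hWt, Nat.card_eq_fintype_card, Fintype.card_subtype,
          mul_comm]

lemma LinearMap.card_ker_eq_card_quotient_range {R M : Type*} [Ring R] [AddCommGroup M]
    [Module R M] [Finite M] (f : M →ₗ[R] M) :
    Nat.card (LinearMap.ker f) = Nat.card (M ⧸ LinearMap.range f) := by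
  have hker := Submodule.card_eq_card_quotient_mul_card (LinearMap.ker f)
  have hrange := Submodule.card_eq_card_quotient_mul_card (LinearMap.range f)
  rw [Nat.card_congr f.quotKerEquivRange.toEquiv, hrange] at hker
  exact (Nat.eq_of_mul_eq_mul_left Nat.card_pos (hker.trans (mul_comm _ _))).symm

lemma IsLocalRing.card_quotient_maximalIdeal_smul_top {R M : Type*} [CommRing R] [IsLocalRing R]
    [AddCommGroup M] [Module R M] [Finite M] (N : Submodule R M) :
    Nat.card (N ⧸ maximalIdeal R • (⊤ : Submodule R N)) =
      Nat.card (R ⧸ maximalIdeal R) ^ N.spanFinrank := by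
  let := Ideal.Quotient.field (maximalIdeal R)
  have hN : N.FG := Module.Finite.iff_fg.mp Module.Finite.of_finite
  rw [spanFinrank_eq_finrank_quotient N hN,
    Module.natCard_eq_pow_finrank (K := R ⧸ maximalIdeal R)]

lemma IsLocalRing.card_span_singleton_le_card_residueField {R : Type*} [CommRing R]
    [IsLocalRing R] [Finite R] {a : R} (ha : ∀ x ∈ maximalIdeal R, x * a = 0) :
    Nat.card (Ideal.span {a}) ≤ Nat.card (R ⧸ maximalIdeal R) := by
  have : Finite (R ⧸ maximalIdeal R) := Finite.of_surjective _ Ideal.Quotient.mk_surjective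
  let f := LinearMap.toSpanSingleton R R a
  have hle : maximalIdeal R ≤ LinearMap.ker f := fun x hx => ha x hx
  calc Nat.card (Ideal.span {a}) = Nat.card (R ⧸ LinearMap.ker f) := by
        rw [Ideal.span, LinearMap.span_singleton_eq_range]
        exact Nat.card_congr f.quotKerEquivRange.toEquiv.symm
    _ ≤ Nat.card (R ⧸ maximalIdeal R) :=
        Nat.card_le_card_of_surjective _ (Ideal.Quotient.factor_surjective hle)

lemma IsCodeRank.pos {R : Type*} [CommRing R] {n : ℕ} {C : Submodule R (Fin n → R)} {K : ℕ}
    (hK : IsCodeRank C K) (hC : C ≠ ⊥) : 0 < K := by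
  obtain ⟨S, hS, hspan⟩ := hK.1
  refine Nat.pos_of_ne_zero fun hK0 => hC ?_
  rw [← hspan, Finset.card_eq_zero.mp (hS.trans hK0), Finset.coe_empty, Submodule.span_empty]

lemma IsCodeRank.le_spanFinrank {R : Type*} [CommRing R] {n : ℕ} {C : Submodule R (Fin n → R)}
    {K : ℕ} (hK : IsCodeRank C K) (hC : C.FG) : K ≤ C.spanFinrank := by
  obtain ⟨S, hS, hspan⟩ := hC.exists_span_finset_card_eq_spanFinrank
  exact hS ▸ hK.2 ⟨S, rfl, hspan⟩

section ChainRing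

variable {R : Type*} [CommRing R] [IsLocalRing R] {γ : R} {s : ℕ}

lemma mul_pow_pred_eq_zero_of_mem_maximalIdeal (hmax : maximalIdeal R = Ideal.span {γ})
    (hnil : γ ^ s = 0) {x : R} (hx : x ∈ maximalIdeal R) : x * γ ^ (s - 1) = 0 := by
  have hs : s ≠ 0 := by
    rintro rfl
    exact one_ne_zero (pow_zero γ ▸ hnil)
  obtain ⟨b, rfl⟩ := Ideal.mem_span_singleton'.mp (hmax ▸ hx)
  rw [mul_assoc, ← pow_succ', Nat.sub_add_cancel (Nat.one_le_iff_ne_zero.mpr hs), hnil, mul_zero]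

lemma mem_span_pow_pred_of_mul_eq_zero (hmax : maximalIdeal R = Ideal.span {γ})
    (hnil' : γ ^ (s - 1) ≠ 0) {x : R} (hx : x * γ = 0) : x ∈ Ideal.span {γ ^ (s - 1)} := by
  suffices ∀ t ≤ s - 1, x ∈ Ideal.span {γ ^ t} from this _ le_rfl
  intro t ht
  induction t with
  | zero => simp
  | succ t ih =>
    obtain ⟨a, rfl⟩ := Ideal.mem_span_singleton'.mp (ih (by omega))
    by_cases ha : IsUnit a
    · refine absurd ?_ hnil'
      have hunit : a * γ ^ (t + 1) = 0 := by rw [pow_succ, ← mul_assoc, hx]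
      rw [← Nat.sub_add_cancel ht, pow_add, ha.mul_right_eq_zero.mp hunit, mul_zero]
    · obtain ⟨b, rfl⟩ := Ideal.mem_span_singleton'.mp (hmax ▸ (mem_maximalIdeal a).mpr ha)
      exact Ideal.mem_span_singleton'.mpr ⟨b, by ring⟩

lemma pow_spanFinrank_le_card_socleCode [Finite R] (hmax : maximalIdeal R = Ideal.span {γ})
    (hnil' : γ ^ (s - 1) ≠ 0) {n : ℕ} (C : Submodule R (Fin n → R)) :
    Nat.card (R ⧸ maximalIdeal R) ^ C.spanFinrank ≤ Nat.card (socleCode γ s C) := by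
  let f := DistribSMul.toLinearMap R C γ
  have hrange : LinearMap.range f = maximalIdeal R • ⊤ := by
    rw [hmax, Submodule.ideal_span_singleton_smul, Submodule.pointwise_smul_def,
      Submodule.map_top]
  have hsocle (x : LinearMap.ker f) : (x : Fin n → R) ∈ socleCode γ s C := by
    refine ⟨x.1.2, fun i _ => mem_span_pow_pred_of_mul_eq_zero hmax hnil' ?_⟩
    have hx : γ • (x : Fin n → R) = 0 := congrArg Subtype.val (LinearMap.mem_ker.mp x.2)
    simpa [mul_comm] using congrFun hx i
  calc Nat.card (R ⧸ maximalIdeal R) ^ C.spanFinrank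
        = Nat.card (C ⧸ maximalIdeal R • (⊤ : Submodule R C)) :=
          (card_quotient_maximalIdeal_smul_top C).symm
    _ = Nat.card (LinearMap.ker f) := by rw [← hrange, f.card_ker_eq_card_quotient_range]
    _ ≤ Nat.card (socleCode γ s C) :=
          Nat.card_le_card_of_injective (fun x => ⟨x, hsocle x⟩)
            fun x y hxy => Subtype.ext <| Subtype.ext <| by simpa using congrArg Subtype.val hxy

end ChainRing

theorem homogeneous_singleton_bound_general {R : Type*} [CommRing R] [IsLocalRing R] [Fintype R]
    (γ : R) (s q : ℕ)
    (hmax : IsLocalRing.maximalIdeal R = Ideal.span {γ})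
    (hnil : γ ^ s = 0) (hnil' : γ ^ (s - 1) ≠ 0)
    (hq : Nat.card (R ⧸ IsLocalRing.maximalIdeal R) = q)
    {n : ℕ} (C : Submodule R (Fin n → R)) (hC : C ≠ ⊥)
    (K : ℕ) (hK : IsCodeRank C K) :
    ∃ c ∈ C, c ≠ 0 ∧
      wtHomV γ s q c ≤ (q : ℚ) / ((q : ℚ) - 1) * ((n : ℚ) - (K : ℚ) + 1) := by
  have hq2 : 2 ≤ q := hq ▸ Finite.one_lt_card
  have hK0 : 0 < K := hK.pos hC
  have hcard : Nat.card (Ideal.span {γ ^ (s - 1)}) ^ (K - 1) < Nat.card (socleCode γ s C) := calc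
    _ ≤ q ^ (K - 1) := Nat.pow_le_pow_left (hq ▸ card_span_singleton_le_card_residueField
          fun _ hx => mul_pow_pred_eq_zero_of_mem_maximalIdeal hmax hnil hx) _
    _ < q ^ K := Nat.pow_lt_pow_right hq2 (by omega)
    _ ≤ q ^ C.spanFinrank := Nat.pow_le_pow_right (by omega)
          (hK.le_spanFinrank (Module.Finite.iff_fg.mp inferInstance))
    _ ≤ _ := hq ▸ pow_spanFinrank_le_card_socleCode hmax hnil' C
  obtain ⟨c, hc_socle, hc0, hc_wt⟩ := exists_ne_zero_hWt_le_of_card_lt _ _ inf_le_right _ hcard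
  have hc_wt' : hWt c + K ≤ n + 1 := by have := hWt_pos hc0; omega
  have hc_wt'' : (hWt c : ℚ) ≤ n - K + 1 := by
    have : ((hWt c + K : ℕ) : ℚ) ≤ n + 1 := by exact_mod_cast hc_wt'
    push_cast at this
    linarith
  refine ⟨c, hc_socle.1, hc0, ?_⟩
  rw [wtHomV_eq_mul_hWt γ s q hc_socle.2]
  have hq1 : (1 : ℚ) ≤ q := by exact_mod_cast hq2.trans' one_le_two
  exact mul_le_mul_of_nonneg_left hc_wt'' (div_nonneg (by linarith) (by linarith))

/-- Singleton bound for the homogeneous weight: any nonzero linear code of rank `K`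
in `R^n` has minimum homogeneous distance at most `M·(n - K + 1)` where `M = q/(q-1)`. -/
theorem homogeneous_singleton_bound {R : Type*} [CommRing R] [IsLocalRing R] [Fintype R]
    (γ : R) (s q : ℕ) (hs : 1 ≤ s)
    (hmax : IsLocalRing.maximalIdeal R = Ideal.span {γ})
    (hnil : γ ^ s = 0) (hnil' : γ ^ (s - 1) ≠ 0)
    (hq : Nat.card (R ⧸ IsLocalRing.maximalIdeal R) = q)
    {n : ℕ} (C : Submodule R (Fin n → R)) (hC : C ≠ ⊥)
    (K : ℕ) (hK : IsCodeRank C K) :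
    ∃ c ∈ C, c ≠ 0 ∧
      wtHomV γ s q c ≤ (q : ℚ) / ((q : ℚ) - 1) * ((n : ℚ) - (K : ℚ) + 1) :=
  homogeneous_singleton_bound_general γ s q hmax hnil hnil' hq C hC K hK
end

section
/- Let R be a finite commutative chain ring with maximal ideal ⟨γ⟩, nilpotency index s, and residue field of size q, and set M = q/(q-1). Let C ⊆ R^n be a linear code of rank K with 1 ≤ K, and assume q > n - K + 1. Then C is MHD (i.e., d_Hom(C) > M·(n - K)) if and only if every nonzero element of the socle C_0 = C ∩ ⟨γ^{s-1}⟩^n has Hamming weight at least n - K + 1 (i.e., C_0 is an MDS code). -/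
open scoped BigOperators Classical

private lemma hWt_eq_card {R : Type*} [Zero R] {n : ℕ} (v : Fin n → R) :
    hWt v = (Finset.univ.filter (fun i => v i ≠ 0)).card := by
  rw [hWt, Nat.card_eq_fintype_card, Fintype.card_subtype]

private lemma unit_factor {R : Type*} [CommRing R] [IsLocalRing R] {γ : R}
    (hmax : IsLocalRing.maximalIdeal R = Ideal.span {γ}) {t : ℕ} {x : R}
    (hx : x ∈ Ideal.span {γ ^ t}) (hx' : x ∉ Ideal.span {γ ^ (t + 1)}) :
    ∃ u : R, IsUnit u ∧ x = γ ^ t * u := by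
  obtain ⟨a, ha⟩ := Ideal.mem_span_singleton.mp hx
  refine ⟨a, ?_, ha⟩
  by_contra hu
  have ha' : a ∈ IsLocalRing.maximalIdeal R := hu
  rw [hmax, Ideal.mem_span_singleton] at ha'
  obtain ⟨b, hb⟩ := ha'
  exact hx' (Ideal.mem_span_singleton.mpr ⟨b, by rw [ha, hb, pow_succ]; ring⟩)

/-- For `q > n - K + 1`, a rank-`K` code is MHD if and only if its socle is MDS. -/
theorem mhd_iff_socle_mds {R : Type*} [CommRing R] [IsLocalRing R] [Fintype R]
    (γ : R) (s q : ℕ) (hs : 1 ≤ s)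
    (hmax : IsLocalRing.maximalIdeal R = Ideal.span {γ})
    (hnil : γ ^ s = 0) (hnil' : γ ^ (s - 1) ≠ 0)
    (hq : Nat.card (R ⧸ IsLocalRing.maximalIdeal R) = q)
    {n : ℕ} (C : Submodule R (Fin n → R)) (K : ℕ) (hK1 : 1 ≤ K)
    (hK : IsCodeRank C K) (hqbig : (n : ℤ) - (K : ℤ) + 1 < (q : ℤ)) :
    (∀ c ∈ C, c ≠ 0 →
        (q : ℚ) / ((q : ℚ) - 1) * ((n : ℚ) - (K : ℚ)) < wtHomV γ s q c) ↔
      (∀ c ∈ socleCode γ s C, c ≠ 0 → n - K + 1 ≤ hWt c) := by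
  -- the residue field has at least two elements
  have hfin : Finite (R ⧸ IsLocalRing.maximalIdeal R) :=
    Finite.of_surjective _ Ideal.Quotient.mk_surjective
  have hnt : Nontrivial (R ⧸ IsLocalRing.maximalIdeal R) :=
    Ideal.Quotient.nontrivial_iff.mpr (Ideal.IsMaximal.ne_top inferInstance)
  have hq2 : 2 ≤ q := by
    have h1 := Finite.one_lt_card_iff_nontrivial.mpr hnt
    omega
  have hden : (0:ℚ) < (q:ℚ) - 1 := by
    have : (2:ℚ) ≤ (q:ℚ) := by exact_mod_cast hq2
    linarith
  have hM : (0:ℚ) < (q:ℚ) / ((q:ℚ) - 1) := by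
    apply div_pos _ hden
    have : (2:ℚ) ≤ (q:ℚ) := by exact_mod_cast hq2
    linarith
  have hwt_nonneg : ∀ x : R, 0 ≤ wtHom γ s q x := by
    intro x
    unfold wtHom
    split_ifs
    · exact le_rfl
    · exact le_of_lt hM
    · norm_num
  have hWt_pos : ∀ v : Fin n → R, v ≠ 0 → 1 ≤ hWt v := by
    intro v hv
    rw [hWt_eq_card]
    obtain ⟨i, hi⟩ := Function.ne_iff.mp hv
    exact Finset.card_pos.mpr ⟨i, Finset.mem_filter.mpr ⟨Finset.mem_univ _, hi⟩⟩
  have hsum : ∀ v : Fin n → R, (∀ i, v i ∈ Ideal.span {γ ^ (s-1)}) →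
      wtHomV γ s q v = (q:ℚ)/((q:ℚ)-1) * (hWt v : ℚ) := by
    intro v hv
    rw [hWt_eq_card, wtHomV]
    rw [← Finset.sum_filter_of_ne (p := fun i => v i ≠ 0)
      (fun i _ hne h0 => hne (by simp [wtHom, h0]))]
    have h1 : ∑ i ∈ Finset.univ.filter (fun i => v i ≠ 0), wtHom γ s q (v i)
        = ∑ _i ∈ Finset.univ.filter (fun i => v i ≠ 0), (q:ℚ)/((q:ℚ)-1) := by
      refine Finset.sum_congr rfl fun i hi => ?_
      have hne := (Finset.mem_filter.mp hi).2
      simp [wtHom, hne, hv i]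
    rw [h1, Finset.sum_const, nsmul_eq_mul, mul_comm]
  have hsocmem : ∀ v : Fin n → R,
      v ∈ socleCode γ s C ↔ v ∈ C ∧ ∀ i, v i ∈ Ideal.span {γ ^ (s-1)} := by
    intro v
    simp [socleCode, Submodule.mem_inf, Submodule.mem_pi]
  constructor
  · intro h c hc hc0
    rw [hsocmem] at hc
    have hw := h c hc.1 hc0
    rw [hsum c hc.2] at hw
    have hlt : (n:ℚ) - K < hWt c := lt_of_mul_lt_mul_left hw (le_of_lt hM)
    have h1 := hWt_pos c hc0
    have hn : n < hWt c + K := by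
      have : (n:ℚ) < (hWt c : ℚ) + K := by linarith
      exact_mod_cast this
    omega
  · intro h c hcC hc0
    by_cases hall : ∀ i, c i ∈ Ideal.span {γ ^ (s-1)}
    · have hw := h c ((hsocmem c).mpr ⟨hcC, hall⟩) hc0
      rw [hsum c hall]
      have h1 := hWt_pos c hc0
      have hn : (n:ℚ) < (hWt c : ℚ) + K := by
        have : n < hWt c + K := by omega
        exact_mod_cast this
      exact mul_lt_mul_of_pos_left (by linarith) hM
    · push_neg at hall
      have hQ : ∃ t, ∃ i, c i ∉ Ideal.span {γ ^ t} := ⟨s - 1, hall⟩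
      set m := Nat.find hQ with hm
      have hmspec := Nat.find_spec hQ
      have hmle : m ≤ s - 1 := Nat.find_min' hQ hall
      have hm1 : 1 ≤ m := by
        rcases Nat.eq_zero_or_pos m with h0 | h0
        · obtain ⟨i, hi⟩ := hmspec
          rw [← hm, h0] at hi
          exact absurd (by simp [Ideal.mem_span_singleton]) hi
        · exact h0
      set t := m - 1 with ht
      have hcall : ∀ i, c i ∈ Ideal.span {γ ^ t} := by
        intro i
        by_contra hi
        exact Nat.find_min hQ (show t < m by omega) ⟨i, hi⟩
      have htm : t + 1 = m := by omega
      have hts : t + 1 ≤ s - 1 := by omega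
      set e := s - 1 - t with he
      have het : e + t = s - 1 := by omega
      set d : Fin n → R := γ ^ e • c with hd
      have hdC : d ∈ C := Submodule.smul_mem C _ hcC
      have hdcoord : ∀ i, d i = γ ^ e * c i := fun i => rfl
      have hdsoc : ∀ i, d i ∈ Ideal.span {γ ^ (s - 1)} := by
        intro i
        obtain ⟨a, ha⟩ := Ideal.mem_span_singleton.mp (hcall i)
        refine Ideal.mem_span_singleton.mpr ⟨a, ?_⟩
        rw [hdcoord, ha, ← mul_assoc, ← pow_add, het]
      have hdne : d ≠ 0 := by
        obtain ⟨i0, hi0⟩ := hmspec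
        rw [← hm, ← htm] at hi0
        obtain ⟨u, hu, hxu⟩ := unit_factor hmax (hcall i0) hi0
        intro h0
        have hz : d i0 = 0 := by rw [h0]; rfl
        rw [hdcoord, hxu, ← mul_assoc, ← pow_add, het] at hz
        exact hnil' (hu.mul_left_eq_zero.mp hz)
      have hw := h d ((hsocmem d).mpr ⟨hdC, hdsoc⟩) hdne
      have hge : (hWt d : ℚ) ≤ wtHomV γ s q c := by
        rw [hWt_eq_card, wtHomV]
        calc ((Finset.univ.filter (fun i => d i ≠ 0)).card : ℚ)
            = ∑ _i ∈ Finset.univ.filter (fun i => d i ≠ 0), (1:ℚ) := by simp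
          _ = ∑ i ∈ Finset.univ.filter (fun i => d i ≠ 0), wtHom γ s q (c i) := by
              refine Finset.sum_congr rfl fun i hi => ?_
              have hdi : d i ≠ 0 := (Finset.mem_filter.mp hi).2
              have hci1 : c i ∉ Ideal.span {γ ^ (t+1)} := by
                intro hmem
                obtain ⟨a, ha⟩ := Ideal.mem_span_singleton.mp hmem
                apply hdi
                rw [hdcoord, ha, ← mul_assoc, ← pow_add,
                  show e + (t+1) = s by omega, hnil, zero_mul]
              have hci0 : c i ≠ 0 := fun h0 =>
                hci1 (h0 ▸ (Ideal.span {γ^(t+1)}).zero_mem)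
              have hcis : c i ∉ Ideal.span {γ ^ (s-1)} := fun hmem =>
                hci1 (Ideal.span_singleton_le_span_singleton.mpr
                  (pow_dvd_pow γ hts) hmem)
              simp [wtHom, hci0, hcis]
          _ ≤ ∑ i, wtHom γ s q (c i) :=
              Finset.sum_le_sum_of_subset_of_nonneg (Finset.filter_subset _ _)
                (fun i _ _ => hwt_nonneg (c i))
      have hnk : ((n - K : ℕ) : ℚ) + 1 ≤ (hWt d : ℚ) := by exact_mod_cast hw
      have hcast : (n:ℚ) - K ≤ ((n - K : ℕ) : ℚ) := by
        rcases le_total K n with hkn | hkn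
        · rw [Nat.cast_sub hkn]
        · have h0 : n - K = 0 := by omega
          rw [h0]
          have : (n:ℚ) ≤ K := by exact_mod_cast hkn
          simp
          linarith
      have hDq : (n:ℚ) - K + 1 < q := by exact_mod_cast hqbig
      have key : (q:ℚ)/((q:ℚ)-1) * ((n:ℚ) - K) < (n:ℚ) - K + 1 := by
        rw [div_mul_eq_mul_div, div_lt_iff₀ hden]
        nlinarith
      calc (q:ℚ)/((q:ℚ)-1) * ((n:ℚ)-K) < (n:ℚ) - K + 1 := key
        _ ≤ ((n-K:ℕ):ℚ) + 1 := by linarith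
        _ ≤ (hWt d : ℚ) := hnk
        _ ≤ wtHomV γ s q c := hge
end

section
/- Let R be a finite commutative chain ring with maximal ideal ⟨γ⟩, nilpotency index s, and residue field of size q, and set M = q/(q-1). Let n = q + 1 and let C ⊆ R^n be a linear code of rank K = 2 which is MHD, i.e., d_Hom(C) > M·(n - 2) = q. Then C ⊆ ⟨γ^{s-1}⟩^n, i.e., every codeword of C lies in the socle. -/
open scoped BigOperators Classical

/-!
Nonzero codewords in the socle `{d ∈ C | γ • d = 0}` have all their nonzero coordinates of
weight `q/(q-1)`, so the MHD bound lets each of them vanish in at most one coordinate. Suppose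
some codeword lies outside the socle; multiplying it by a power of `γ` gives `c'` with
`d₀ = γ • c' ≠ 0` in the socle. As `C` needs two generators, its socle is not cyclic (a module
over a chain ring with cyclic socle is cyclic), so it contains some `d₁ ∉ R ∙ d₀`. Pigeonholing
the ratios `d₁ j / d₀ j` in the residue field, which has only `q < q + 1` elements, shows that
`d₀` vanishes at a coordinate `i` where `d₁` does not. Subtracting a multiple of `d₁` from `c'`
yields a codeword vanishing at `i` and lying outside the socle at the `q` other coordinates: its
weight is `q`, against the MHD bound.
-/

section ChainRing

variable {R : Type*} [CommRing R] [IsLocalRing R] {γ : R}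

theorem isUnit_or_dvd_of_maximalIdeal_eq_span
    (hmax : IsLocalRing.maximalIdeal R = Ideal.span {γ}) (a : R) : IsUnit a ∨ γ ∣ a := by
  rw [← Ideal.mem_span_singleton, ← hmax, IsLocalRing.mem_maximalIdeal, mem_nonunits_iff]
  exact em _

theorem isUnit_of_smul_ne_zero {M : Type*} [AddCommGroup M] [Module R M]
    (hmax : IsLocalRing.maximalIdeal R = Ideal.span {γ}) {w : M} (hw : γ • w = 0) {r : R}
    (hr : r • w ≠ 0) : IsUnit r := by
  refine (isUnit_or_dvd_of_maximalIdeal_eq_span hmax r).resolve_right ?_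
  rintro ⟨b, rfl⟩
  exact hr (by rw [mul_comm, mul_smul, hw, smul_zero])

theorem span_singleton_eq_of_mem_of_smul_eq_zero {M : Type*} [AddCommGroup M] [Module R M]
    (hmax : IsLocalRing.maximalIdeal R = Ideal.span {γ}) {w x : M} (hw : γ • w = 0)
    (hx : x ∈ R ∙ w) (hx0 : x ≠ 0) : R ∙ x = R ∙ w := by
  obtain ⟨r, rfl⟩ := Submodule.mem_span_singleton.mp hx
  exact Submodule.span_singleton_smul_eq (isUnit_of_smul_ne_zero hmax hw hx0) w

variable {s : ℕ}

theorem mem_span_pow_sub_one_iff (hmax : IsLocalRing.maximalIdeal R = Ideal.span {γ})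
    (hnil : γ ^ s = 0) (hnil' : γ ^ (s - 1) ≠ 0) {x : R} :
    x ∈ Ideal.span {γ ^ (s - 1)} ↔ γ * x = 0 := by
  have hs : s ≠ 0 := by rintro rfl; simp at hnil
  rw [Ideal.mem_span_singleton]
  constructor
  · rintro ⟨a, rfl⟩
    rw [← mul_assoc, mul_pow_sub_one hs, hnil, zero_mul]
  · intro hx
    suffices ∀ k ≤ s - 1, γ ^ k ∣ x from this _ le_rfl
    intro k hk
    induction k with
    | zero => simp
    | succ k ih =>
      obtain ⟨a, rfl⟩ := ih (by omega)
      rcases isUnit_or_dvd_of_maximalIdeal_eq_span hmax a with ha | ⟨b, rfl⟩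
      · rw [← mul_assoc, ← pow_succ', ha.mul_left_eq_zero] at hx
        exact absurd (pow_eq_zero_of_le hk hx) hnil'
      · exact ⟨b, by ring⟩

theorem dvd_of_mul_eq_zero_of_mul_eq_zero (hmax : IsLocalRing.maximalIdeal R = Ideal.span {γ})
    (hnil : γ ^ s = 0) (hnil' : γ ^ (s - 1) ≠ 0) {x y : R} (hx : γ * x = 0) (hx0 : x ≠ 0)
    (hy : γ * y = 0) : x ∣ y := by
  rw [← mem_span_pow_sub_one_iff hmax hnil hnil'] at hx hy
  have hsoc : γ • γ ^ (s - 1) = 0 :=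
    (mem_span_pow_sub_one_iff hmax hnil hnil').mp (Ideal.mem_span_singleton_self _)
  rw [← Ideal.mem_span_singleton]
  change y ∈ R ∙ x
  rwa [span_singleton_eq_of_mem_of_smul_eq_zero hmax hsoc hx hx0]

end ChainRing

section Torsion

variable {R M : Type*} [CommRing R] [AddCommGroup M] [Module R M] {γ : R}

theorem exists_pow_smul_ne_zero_and_smul_eq_zero {s : ℕ} {c : M} (hs : γ ^ s • c = 0)
    (hc : c ≠ 0) : ∃ k, γ ^ k • c ≠ 0 ∧ γ • γ ^ k • c = 0 := by
  induction s generalizing c with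
  | zero => exact absurd (by simpa using hs) hc
  | succ s ih =>
    by_cases hγc : γ • c = 0
    · exact ⟨0, by simpa using hc, by simpa using hγc⟩
    · obtain ⟨k, hk⟩ := ih (c := γ • c) (by rwa [smul_smul, ← pow_succ]) hγc
      exact ⟨k + 1, by rwa [pow_succ, mul_smul]⟩

theorem le_span_singleton_of_ker_smul_le {N : Submodule R M} {x : M} {e : ℕ} (hx : x ∈ N)
    (hN : ∀ y ∈ N, γ ^ (e + 1) • y = 0) (hker : ∀ y ∈ N, γ • y = 0 → y ∈ R ∙ (γ ^ e • x)) :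
    N ≤ R ∙ x := by
  suffices ∀ k ≤ e + 1, ∀ y ∈ N, γ ^ k • y = 0 → y ∈ R ∙ x from
    fun y hy => this _ le_rfl y hy (hN y hy)
  intro k hk
  induction k with
  | zero =>
    intro y _ hy
    rw [pow_zero, one_smul] at hy
    simp [hy]
  | succ k ih =>
    intro y hy hky
    obtain ⟨a, ha⟩ := Submodule.mem_span_singleton.mp
      (hker _ (N.smul_mem _ hy) (by rwa [smul_smul, ← pow_succ']))
    have hpow : γ ^ k * (a * γ ^ (e - k)) = a * γ ^ e := by
      rw [mul_left_comm, ← pow_add, Nat.add_sub_cancel' (by omega)]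
    have hz : y - (a * γ ^ (e - k)) • x ∈ R ∙ x :=
      ih (by omega) _ (N.sub_mem hy (N.smul_mem _ hx)) (by
        rw [smul_sub, smul_smul, hpow, mul_smul, ha, sub_self])
    simpa using add_mem hz
      (Submodule.smul_mem _ (a * γ ^ (e - k)) (Submodule.mem_span_singleton_self x))

theorem exists_eq_span_singleton_of_ker_smul_le [IsLocalRing R]
    (hmax : IsLocalRing.maximalIdeal R = Ideal.span {γ}) {s : ℕ} (hnil : γ ^ s = 0)
    {N : Submodule R M} {w : M} (hw : γ • w = 0) (hker : ∀ y ∈ N, γ • y = 0 → y ∈ R ∙ w) :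
    ∃ x, N = R ∙ x := by
  have hex : ∃ m, ∀ y ∈ N, γ ^ m • y = 0 := ⟨s, fun y _ => by rw [hnil, zero_smul]⟩
  -- `Nat.find hex` is the exponent of `N`; an element `x` of maximal order then spans `N`
  rcases h : Nat.find hex with _ | e
  · refine ⟨0, ?_⟩
    rw [Submodule.span_singleton_eq_bot.mpr rfl, eq_bot_iff]
    intro y hy
    simpa [h] using Nat.find_spec hex y hy
  · have hN : ∀ y ∈ N, γ ^ (e + 1) • y = 0 := h ▸ Nat.find_spec hex
    obtain ⟨x, hx, hex0⟩ : ∃ x ∈ N, γ ^ e • x ≠ 0 := by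
      simpa using Nat.find_min hex (h ▸ Nat.lt_succ_self e)
    refine ⟨x, le_antisymm (le_span_singleton_of_ker_smul_le hx hN ?_)
      ((Submodule.span_singleton_le_iff_mem _ _).mpr hx)⟩
    rw [span_singleton_eq_of_mem_of_smul_eq_zero hmax hw (hker _ (N.smul_mem _ hx) ?_) hex0]
    · exact hker
    · rw [smul_smul, ← pow_succ']
      exact hN x hx

end Torsion

theorem IsCodeRank.le_one_of_eq_span_singleton {R : Type*} [CommRing R] {n K : ℕ}
    {C : Submodule R (Fin n → R)} (h : IsCodeRank C K) {x : Fin n → R} (hx : C = R ∙ x) :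
    K ≤ 1 :=
  h.2 ⟨{x}, Finset.card_singleton x, by rw [Finset.coe_singleton, hx]⟩

section Weights

variable {R : Type*} [CommRing R] {γ : R} {s q n : ℕ} {v : Fin n → R}

theorem hWt_add_card_le {S : Finset (Fin n)} (hS : ∀ i ∈ S, v i = 0) : hWt v + S.card ≤ n := by
  rw [hWt, Nat.card_eq_fintype_card, Fintype.card_subtype]
  calc (Finset.univ.filter fun i => v i ≠ 0).card + S.card
      ≤ (Finset.univ \ S).card + S.card := by
        gcongr
        intro i hi
        simp only [Finset.mem_filter, Finset.mem_univ, true_and] at hi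
        simpa using fun hiS => hi (hS i hiS)
    _ = n := by simpa [Finset.card_univ_sdiff] using Nat.sub_add_cancel (S.card_le_univ)

theorem wtHomV_of_forall_mem_span (hv : ∀ i, v i ∈ Ideal.span {γ ^ (s - 1)}) :
    wtHomV γ s q v = q / (q - 1) * hWt v := by
  have hwt : ∀ i, wtHom γ s q (v i) = q / (q - 1) * if v i ≠ 0 then 1 else 0 := fun i => by
    by_cases h : v i = 0 <;> simp [wtHom, h, hv i]
  simp only [wtHomV, hwt, ← Finset.mul_sum, Finset.sum_boole, hWt, Nat.card_eq_fintype_card,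
    Fintype.card_subtype]

theorem wtHomV_of_forall_notMem_span (hv : ∀ i, v i ≠ 0 → v i ∉ Ideal.span {γ ^ (s - 1)}) :
    wtHomV γ s q v = hWt v := by
  have hwt : ∀ i, wtHom γ s q (v i) = if v i ≠ 0 then 1 else 0 := fun i => by
    by_cases h : v i = 0 <;> simp [wtHom, h, hv i]
  simp only [wtHomV, hwt, Finset.sum_boole, hWt, Nat.card_eq_fintype_card, Fintype.card_subtype]

theorem setOf_apply_eq_zero_subsingleton_of_lt_wtHomV (hq : 1 < q)
    (hv : ∀ i, v i ∈ Ideal.span {γ ^ (s - 1)}) (h : (q : ℚ) / (q - 1) * (n - 2) < wtHomV γ s q v) :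
    {j | v j = 0}.Subsingleton := by
  intro j hj k hk
  by_contra hjk
  have hM : (0 : ℚ) < q / (q - 1) := div_pos (by positivity) (by norm_num; exact_mod_cast hq)
  rw [wtHomV_of_forall_mem_span hv] at h
  have hcard := hWt_add_card_le (v := v) (S := {j, k})
    (by simp [show v j = 0 from hj, show v k = 0 from hk])
  rw [Finset.card_pair hjk] at hcard
  have : (hWt v : ℚ) + 2 ≤ n := by exact_mod_cast hcard
  linarith [lt_of_mul_lt_mul_left h hM.le]

theorem wtHomV_add_one_le {i : Fin n} (hv : ∀ j, v j ≠ 0 → v j ∉ Ideal.span {γ ^ (s - 1)})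
    (hi : v i = 0) : wtHomV γ s q v + 1 ≤ n := by
  rw [wtHomV_of_forall_notMem_span hv]
  exact_mod_cast hWt_add_card_le (S := {i}) (by simpa using hi)

end Weights

section Codes

variable {R : Type*} [CommRing R] [IsLocalRing R] {γ : R} {s n : ℕ}
  {C : Submodule R (Fin n → R)}

theorem exists_apply_eq_zero_and_apply_ne_zero [Finite R]
    (hmax : IsLocalRing.maximalIdeal R = Ideal.span {γ}) (hnil : γ ^ s = 0)
    (hnil' : γ ^ (s - 1) ≠ 0) (hn : Nat.card (R ⧸ IsLocalRing.maximalIdeal R) < n)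
    (hzeros : ∀ d ∈ C, γ • d = 0 → d ≠ 0 → {j | d j = 0}.Subsingleton)
    {d₀ d₁ : Fin n → R} (hd₀ : d₀ ∈ C) (hd₁ : d₁ ∈ C) (hγd₀ : γ • d₀ = 0) (hγd₁ : γ • d₁ = 0)
    (hd₀0 : d₀ ≠ 0) (hd₁₀ : d₁ ∉ R ∙ d₀) : ∃ i, d₀ i = 0 ∧ d₁ i ≠ 0 := by
  have hdvd : ∀ j, d₀ j ≠ 0 → d₀ j ∣ d₁ j := fun j hj =>
    dvd_of_mul_eq_zero_of_mul_eq_zero hmax hnil hnil' (congrFun hγd₀ j) hj (congrFun hγd₁ j)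
  have hzeros' : ∀ r : R, {j | (d₁ - r • d₀) j = 0}.Subsingleton := fun r =>
    hzeros _ (C.sub_mem hd₁ (C.smul_mem r hd₀))
      (by rw [smul_sub, smul_comm, hγd₀, hγd₁, smul_zero, sub_zero])
      (fun h => hd₁₀ (Submodule.mem_span_singleton.mpr ⟨r, (sub_eq_zero.mp h).symm⟩))
  obtain ⟨i, hi⟩ : ∃ i, d₀ i = 0 := by
    by_contra! h
    choose r hr using fun j => hdvd j (h j)
    have : Finite (R ⧸ IsLocalRing.maximalIdeal R) :=
      Finite.of_surjective _ Ideal.Quotient.mk_surjective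
    -- two coordinates with congruent ratios `d₁ j / d₀ j` would both be zeros of one codeword
    have hinj :
        Function.Injective fun j ↦ Ideal.Quotient.mk (IsLocalRing.maximalIdeal R) (r j) := by
      intro j k hjk
      obtain ⟨b, hb⟩ : γ ∣ r k - r j := by
        rw [← Ideal.mem_span_singleton, ← hmax]
        exact Ideal.Quotient.eq.mp hjk.symm
      refine hzeros' (r j) (by simp [hr j, mul_comm]) ?_
      have : γ * d₀ k = 0 := congrFun hγd₀ k
      simp only [Set.mem_ofPred_eq, Pi.sub_apply, Pi.smul_apply, smul_eq_mul, hr k]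
      linear_combination b * this + d₀ k * hb
    have := Nat.card_le_card_of_injective _ hinj
    simp only [Nat.card_eq_fintype_card, Fintype.card_fin] at this
    omega
  obtain ⟨j, hj⟩ := Function.ne_iff.mp hd₀0
  obtain ⟨r, hr⟩ := hdvd j hj
  refine ⟨i, hi, fun hd₁i => hj ?_⟩
  rwa [hzeros' r (show (d₁ - r • d₀) j = 0 by simp [hr, mul_comm])
    (show (d₁ - r • d₀) i = 0 by simp [hd₁i, hi])]

theorem exists_mem_ne_zero_apply_eq_zero_and_mul_apply_ne_zero [Finite R]
    (hmax : IsLocalRing.maximalIdeal R = Ideal.span {γ}) (hnil : γ ^ s = 0)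
    (hnil' : γ ^ (s - 1) ≠ 0) (hn : Nat.card (R ⧸ IsLocalRing.maximalIdeal R) < n)
    (hzeros : ∀ d ∈ C, γ • d = 0 → d ≠ 0 → {j | d j = 0}.Subsingleton)
    (hcyc : ∀ x, C ≠ R ∙ x) {c : Fin n → R} (hc : c ∈ C) (hγc : γ • c ≠ 0) :
    ∃ y ∈ C, y ≠ 0 ∧ ∃ i, y i = 0 ∧ ∀ j ≠ i, γ * y j ≠ 0 := by
  obtain ⟨k, hk, hk'⟩ := exists_pow_smul_ne_zero_and_smul_eq_zero
    (by rw [hnil, zero_smul] : γ ^ s • γ • c = 0) hγc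
  set d₀ := γ ^ k • γ • c
  have hd₀ : d₀ ∈ C := C.smul_mem _ (C.smul_mem _ hc)
  obtain ⟨d₁, hd₁, hγd₁, hd₁₀⟩ : ∃ d₁ ∈ C, γ • d₁ = 0 ∧ d₁ ∉ R ∙ d₀ := by
    by_contra! h
    obtain ⟨x, hx⟩ := exists_eq_span_singleton_of_ker_smul_le hmax hnil hk' h
    exact hcyc x hx
  obtain ⟨i, hi, hd₁i⟩ := exists_apply_eq_zero_and_apply_ne_zero hmax hnil hnil' hn hzeros
    hd₀ hd₁ hk' hγd₁ hk hd₁₀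
  have hγc' : γ • γ ^ k • c = d₀ := smul_comm _ _ _
  obtain ⟨a, ha⟩ := dvd_of_mul_eq_zero_of_mul_eq_zero hmax hnil hnil' (congrFun hγd₁ i) hd₁i
    (show γ * (γ ^ k • c) i = 0 from (congrFun hγc' i).trans hi)
  have hγy : γ • (γ ^ k • c - a • d₁) = d₀ := by
    rw [smul_sub, smul_comm γ a, hγd₁, smul_zero, sub_zero, hγc']
  refine ⟨γ ^ k • c - a • d₁, C.sub_mem (C.smul_mem _ hc) (C.smul_mem _ hd₁),
    fun h => hk (by rw [← hγy, h, smul_zero]), i,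
    by simp [ha, mul_comm], fun j hj h => hj (hzeros d₀ hd₀ hk' hk ?_ hi)⟩
  rw [← hγy]
  exact h

end Codes

theorem mhd_rank_two_in_socle_general {R : Type*} [CommRing R] [IsLocalRing R] [Fintype R]
    (γ : R) (s q : ℕ)
    (hmax : IsLocalRing.maximalIdeal R = Ideal.span {γ})
    (hnil : γ ^ s = 0) (hnil' : γ ^ (s - 1) ≠ 0)
    (hq : Nat.card (R ⧸ IsLocalRing.maximalIdeal R) = q)
    (C : Submodule R (Fin (q + 1) → R)) (hK : IsCodeRank C 2)
    (hMHD : ∀ c ∈ C, c ≠ 0 →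
      (q : ℚ) / ((q : ℚ) - 1) * (((q : ℚ) + 1) - 2) < wtHomV γ s q c) :
    ∀ c ∈ C, ∀ i, c i ∈ Ideal.span {γ ^ (s - 1)} := by
  have hsoc (x : R) := mem_span_pow_sub_one_iff hmax hnil hnil' (x := x)
  have hq1 : 1 < q := hq ▸ Finite.one_lt_card
  have hzeros : ∀ d ∈ C, γ • d = 0 → d ≠ 0 → {j | d j = 0}.Subsingleton :=
    fun d hd hγd hd0 => setOf_apply_eq_zero_subsingleton_of_lt_wtHomV hq1
      (fun i => (hsoc _).mpr (congrFun hγd i)) (by push_cast; exact hMHD d hd hd0)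
  have hcyc : ∀ x, C ≠ R ∙ x := fun x hx => by
    have := hK.le_one_of_eq_span_singleton hx
    omega
  intro c hc i
  by_contra hci
  obtain ⟨y, hy, hy0, i₀, hyi₀, hyj⟩ := exists_mem_ne_zero_apply_eq_zero_and_mul_apply_ne_zero
    hmax hnil hnil' (by omega) hzeros hcyc hc (fun h => hci ((hsoc _).mpr (congrFun h i)))
  have hwt : wtHomV γ s q y + 1 ≤ ((q + 1 : ℕ) : ℚ) := wtHomV_add_one_le
    (fun j hj0 => (not_congr (hsoc _)).mpr (hyj j (by rintro rfl; exact hj0 hyi₀))) hyi₀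
  have hM : (q : ℚ) / ((q : ℚ) - 1) * (((q : ℚ) + 1) - 2) = q := by
    have : (q : ℚ) - 1 ≠ 0 := sub_ne_zero.mpr (by exact_mod_cast hq1.ne')
    field_simp
    ring
  have := hMHD y hy hy0
  push_cast at hwt
  linarith

/-- For length `n = q + 1` and rank `K = 2`, any MHD code lies in the socle `⟨γ^(s-1)⟩^n`. -/
theorem mhd_rank_two_in_socle {R : Type*} [CommRing R] [IsLocalRing R] [Fintype R]
    (γ : R) (s q : ℕ) (hs : 1 ≤ s)
    (hmax : IsLocalRing.maximalIdeal R = Ideal.span {γ})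
    (hnil : γ ^ s = 0) (hnil' : γ ^ (s - 1) ≠ 0)
    (hq : Nat.card (R ⧸ IsLocalRing.maximalIdeal R) = q)
    (C : Submodule R (Fin (q + 1) → R)) (hK : IsCodeRank C 2)
    (hMHD : ∀ c ∈ C, c ≠ 0 →
      (q : ℚ) / ((q : ℚ) - 1) * (((q : ℚ) + 1) - 2) < wtHomV γ s q c) :
    ∀ c ∈ C, ∀ i, c i ∈ Ideal.span {γ ^ (s - 1)} :=
  mhd_rank_two_in_socle_general γ s q hmax hnil hnil' hq C hK hMHD
end

section
/- Let F₄ = F₂(α) with α² = α + 1 and let R = F₄[x]/(x²), a finite chain ring with maximal ideal ⟨x⟩, nilpotency index s = 2, and residue field of size q = 4, so M = 4/3. Let C ⊆ R⁶ be the linear code generated by the three rows (1, α, 1, α, α, 1), (0, x, 0, x, (α+1)x, αx), (0, 0, x, x, x, x). Then C has rank 3, its minimum homogeneous distance equals 16/3, so C is MHD (16/3 > (4/3)·(6 − 3) = 4), and C is not contained in ⟨x⟩⁶ (it contains a codeword with some coordinate not in ⟨x⟩). -/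
open scoped BigOperators Classical

/-- The chain ring `F₄[x]/(x²)`. -/
abbrev RChain (F : Type*) [Field F] : Type _ :=
  AdjoinRoot (Polynomial.X ^ 2 : Polynomial F)

/-!
Write `ε` for the class of `X` and `e₀, e₁, e₂` for the rows of `hexRow α`, which span the hexacode
over `F`. Every codeword is `a e₀ + ε h` with `a ∈ F` and `h` in the hexacode. If `a ≠ 0`, all six
coordinates are units, so the weight is `6`; otherwise the weight is `4/3` times the Hamming weight
of `h`, and the hexacode has minimum distance `4`. That last fact is a finite check over the 64
messages, done in coordinates over the `𝔽₂`-basis `1, α` of `F`. For the rank: writing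
`h = b e₀ + v e₁ + w e₂`, the map `c ↦ (a, v, w)` is additive, turns multiplication by `r` into
multiplication by the residue of `r`, and is onto `F³`, so any generating set has at least three
elements.
-/

open Polynomial

theorem charP_two_of_nat_card_eq_four {F : Type*} [Field F] (hF : Nat.card F = 4) :
    CharP F 2 := by
  have : Finite F := Nat.finite_of_card_ne_zero (by rw [hF]; norm_num)
  let _ := Fintype.ofFinite F
  exact ringChar.of_eq (FiniteField.even_card_iff_char_two.mpr
    (by rw [Fintype.card_eq_nat_card, hF]))

namespace RChain

variable {F : Type*} [Field F]

local notation "ε" => AdjoinRoot.root (X ^ 2 : F[X])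
local notation "ι" => algebraMap F (RChain F)

theorem root_sq : (ε : RChain F) ^ 2 = 0 := by
  rw [← AdjoinRoot.mk_X, ← map_pow, AdjoinRoot.mk_self]

/-- The coefficient of `ε ^ n` in the normal form `a + b ε` of an element of `F[X]/(X²)`. -/
noncomputable def coeff (n : ℕ) : RChain F →ₗ[F] F :=
  lcoeff F n ∘ₗ AdjoinRoot.modByMonicHom (monic_X_pow 2)

theorem coeff_algebraMap_add_mul_root (a b : F) (n : ℕ) :
    coeff n (ι a + ι b * ε) = (C a + C b * X).coeff n := by
  have hdeg : (C a + C b * X).degree < (X ^ 2 : F[X]).degree := by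
    rw [degree_X_pow, add_comm]
    exact degree_linear_le.trans_lt (by norm_num)
  have hmk : ι a + ι b * ε = AdjoinRoot.mk (X ^ 2) (C a + C b * X) := by
    simp [AdjoinRoot.algebraMap_eq]
  rw [hmk]
  simp only [coeff, LinearMap.comp_apply, AdjoinRoot.modByMonicHom_mk, lcoeff_apply,
    (modByMonic_eq_self_iff (monic_X_pow 2)).mpr hdeg]

theorem coeff_zero_algebraMap_add_mul_root (a b : F) : coeff 0 (ι a + ι b * ε) = a := by
  rw [coeff_algebraMap_add_mul_root]
  simp

theorem coeff_one_algebraMap_add_mul_root (a b : F) : coeff 1 (ι a + ι b * ε) = b := by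
  rw [coeff_algebraMap_add_mul_root]
  simp

theorem eq_algebraMap_add_mul_root (r : RChain F) : r = ι (coeff 0 r) + ι (coeff 1 r) * ε := by
  obtain ⟨p, rfl⟩ := AdjoinRoot.mk_surjective r
  have hle : (p %ₘ X ^ 2).degree ≤ 1 := by
    have := degree_modByMonic_lt p (monic_X_pow (R := F) 2)
    rw [degree_X_pow] at this
    exact Order.le_of_lt_succ this
  conv_lhs => rw [← AdjoinRoot.mk_leftInverse (monic_X_pow 2) (AdjoinRoot.mk _ p),
    AdjoinRoot.modByMonicHom_mk, eq_X_add_C_of_degree_le_one hle]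
  simp [coeff, AdjoinRoot.modByMonicHom_mk, AdjoinRoot.algebraMap_eq, add_comm]

theorem eq_zero_iff (r : RChain F) : r = 0 ↔ coeff 0 r = 0 ∧ coeff 1 r = 0 := by
  refine ⟨fun h => by simp [h], fun ⟨h₀, h₁⟩ => ?_⟩
  rw [eq_algebraMap_add_mul_root r, h₀, h₁]
  simp

theorem mem_span_root_iff (r : RChain F) : r ∈ Ideal.span {ε} ↔ coeff 0 r = 0 := by
  constructor
  · rintro h
    obtain ⟨t, rfl⟩ := Ideal.mem_span_singleton'.mp h
    have ht : t * ε = ι 0 + ι (coeff 0 t) * ε := by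
      rw [map_zero, zero_add]
      conv_lhs => rw [eq_algebraMap_add_mul_root t]
      linear_combination ι (coeff 1 t) * root_sq (F := F)
    rw [ht, coeff_zero_algebraMap_add_mul_root]
  · intro h
    rw [eq_algebraMap_add_mul_root r, h, map_zero, zero_add]
    exact Ideal.mul_mem_left _ _ (Ideal.subset_span rfl)

theorem wtHom_of_coeff_zero_ne_zero {r : RChain F} (h : coeff 0 r ≠ 0) (q : ℕ) :
    wtHom ε 2 q r = 1 := by
  have hr : r ≠ 0 := fun hr => h (by simp [hr])
  simp [wtHom, hr, mem_span_root_iff, h]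

theorem wtHom_mul_root (b : F) (q : ℕ) :
    wtHom ε 2 q (ι b * ε) = if b = 0 then 0 else (q : ℚ) / (q - 1) := by
  have hb : ι b * ε = ι 0 + ι b * ε := by rw [map_zero, zero_add]
  have hne : ι b * ε = 0 ↔ b = 0 := by
    rw [eq_zero_iff, hb, coeff_zero_algebraMap_add_mul_root, coeff_one_algebraMap_add_mul_root]
    exact and_iff_right rfl
  have hmem : ι b * ε ∈ Ideal.span {ε ^ (2 - 1)} :=
    Ideal.mul_mem_left _ _ (Ideal.subset_span (by simp))
  by_cases h : b = 0
  · simp [wtHom, h]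
  · rw [wtHom, if_neg (hne.not.mpr h), if_pos hmem, if_neg h]

noncomputable def mkVec {n : ℕ} (u₀ u₁ : Fin n → F) : Fin n → RChain F :=
  fun i => ι (u₀ i) + ι (u₁ i) * ε

section Vectors

variable {n : ℕ}

@[simp]
theorem coeff_zero_mkVec (u₀ u₁ : Fin n → F) (i : Fin n) : coeff 0 (mkVec u₀ u₁ i) = u₀ i :=
  coeff_zero_algebraMap_add_mul_root _ _

@[simp]
theorem coeff_one_mkVec (u₀ u₁ : Fin n → F) (i : Fin n) : coeff 1 (mkVec u₀ u₁ i) = u₁ i :=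
  coeff_one_algebraMap_add_mul_root _ _

theorem mkVec_inj {u₀ u₁ v₀ v₁ : Fin n → F} : mkVec u₀ u₁ = mkVec v₀ v₁ ↔ u₀ = v₀ ∧ u₁ = v₁ := by
  refine ⟨fun h => ⟨funext fun i => ?_, funext fun i => ?_⟩, fun ⟨h₀, h₁⟩ => h₀ ▸ h₁ ▸ rfl⟩
  · simpa using congrArg (fun c => coeff 0 (c i)) h
  · simpa using congrArg (fun c => coeff 1 (c i)) h

theorem mkVec_zero_zero : mkVec (0 : Fin n → F) 0 = 0 := by
  funext i
  simp [mkVec]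

theorem mkVec_eq_zero_iff (u₀ u₁ : Fin n → F) : mkVec u₀ u₁ = 0 ↔ u₀ = 0 ∧ u₁ = 0 := by
  rw [← mkVec_zero_zero, mkVec_inj]

theorem mkVec_add (u₀ u₁ v₀ v₁ : Fin n → F) :
    mkVec u₀ u₁ + mkVec v₀ v₁ = mkVec (u₀ + v₀) (u₁ + v₁) := by
  funext i
  simp only [mkVec, Pi.add_apply, map_add]
  ring

theorem smul_mkVec (r : RChain F) (u₀ u₁ : Fin n → F) :
    r • mkVec u₀ u₁ = mkVec (coeff 0 r • u₀) (coeff 0 r • u₁ + coeff 1 r • u₀) := by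
  funext i
  conv_lhs => rw [eq_algebraMap_add_mul_root r]
  simp only [mkVec, Pi.smul_apply, Pi.add_apply, smul_eq_mul, map_add, map_mul]
  linear_combination ι (coeff 1 r) * ι (u₁ i) * root_sq (F := F)

theorem mkVec_apply_mem_span_root_iff (u₀ u₁ : Fin n → F) (i : Fin n) :
    mkVec u₀ u₁ i ∈ Ideal.span {ε} ↔ u₀ i = 0 := by
  rw [mem_span_root_iff, coeff_zero_mkVec]

theorem algebraMap_smul_mkVec (a : F) (u₀ u₁ : Fin n → F) :
    ι a • mkVec u₀ u₁ = mkVec (a • u₀) (a • u₁) := by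
  funext i
  simp only [mkVec, Pi.smul_apply, smul_eq_mul, map_mul]
  ring

theorem root_smul_mkVec (u : Fin n → F) : ε • mkVec u 0 = mkVec 0 u := by
  funext i
  simp only [mkVec, Pi.smul_apply, Pi.zero_apply, smul_eq_mul, map_zero]
  ring

theorem wtHomV_mkVec_zero (u : Fin n → F) (q : ℕ) :
    wtHomV ε 2 q (mkVec 0 u) = (q : ℚ) / (q - 1) * hammingNorm u := by
  have hterm : ∀ i, wtHom ε 2 q (mkVec 0 u i) = if u i ≠ 0 then (q : ℚ) / (q - 1) else 0 := by
    intro i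
    simp only [mkVec, Pi.zero_apply, map_zero, zero_add, wtHom_mul_root, ite_not]
  simp only [wtHomV, hterm, ← Finset.sum_filter, Finset.sum_const, nsmul_eq_mul, hammingNorm]
  ring

theorem wtHomV_mkVec_of_forall_ne_zero {u₀ : Fin n → F} (h : ∀ i, u₀ i ≠ 0) (u₁ : Fin n → F)
    (q : ℕ) : wtHomV ε 2 q (mkVec u₀ u₁) = n := by
  simp [wtHomV, wtHom_of_coeff_zero_ne_zero, h]

end Vectors

end RChain

section Hexacode

variable {F : Type*} [Field F]

def hexRow (α : F) : Fin 3 → Fin 6 → F :=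
  ![![1, α, 1, α, α, 1], ![0, 1, 0, 1, α + 1, α], ![0, 0, 1, 1, 1, 1]]

def hexacode (α : F) : Submodule F (Fin 6 → F) :=
  Submodule.span F (Set.range (hexRow α))

/-- Multiplication by `α` on `𝔽₄ = 𝔽₂ ⊕ 𝔽₂ α`, in coordinates over the basis `1, α`
(using `α² = α + 1`). -/
def mulAlpha (z : ZMod 2 × ZMod 2) : ZMod 2 × ZMod 2 := (z.2, z.1 + z.2)

/-- The hexacode word `b e₀ + v e₁ + w e₂` in the binary coordinates of `mulAlpha`. -/
def hexModel (b v w : ZMod 2 × ZMod 2) : Fin 6 → ZMod 2 × ZMod 2 :=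
  ![b, mulAlpha b + v, b + w, mulAlpha b + v + w, mulAlpha b + mulAlpha v + v + w,
    b + mulAlpha v + w]

theorem four_le_hammingNorm_hexModel :
    ∀ b v w, hexModel b v w ≠ 0 → 4 ≤ hammingNorm (hexModel b v w) := by
  decide

variable [CharP F 2]

noncomputable def ofBinary (α : F) (z : ZMod 2 × ZMod 2) : F :=
  ZMod.castHom (dvd_refl 2) F z.1 + ZMod.castHom (dvd_refl 2) F z.2 * α

theorem ofBinary_add (α : F) (z z' : ZMod 2 × ZMod 2) :
    ofBinary α (z + z') = ofBinary α z + ofBinary α z' := by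
  simp only [ofBinary, Prod.fst_add, Prod.snd_add, map_add]
  ring

theorem ofBinary_mulAlpha {α : F} (hα : α ^ 2 = α + 1) (z : ZMod 2 × ZMod 2) :
    ofBinary α (mulAlpha z) = α * ofBinary α z := by
  simp only [ofBinary, mulAlpha, map_add]
  linear_combination -ZMod.castHom (dvd_refl 2) F z.2 * hα

theorem ofBinary_injective {α : F} (hα : α ^ 2 = α + 1) : Function.Injective (ofBinary α) := by
  have hzero : ∀ z, ofBinary α z = 0 → z = 0 := by
    have h01 : ∀ p : ZMod 2, p = 0 ∨ p = 1 := by decide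
    rintro ⟨p, q⟩ h
    rcases h01 p with rfl | rfl <;> rcases h01 q with rfl | rfl <;> simp [ofBinary] at h ⊢
    · simp [h] at hα
    · exact one_ne_zero (by linear_combination hα - (α - 2) * h : (1 : F) = 0)
  intro z z' h
  have hsum : z + z' = 0 := hzero _ (by rw [ofBinary_add, h, CharTwo.add_self_eq_zero])
  have hadd : ∀ z z' : ZMod 2 × ZMod 2, z + z' = 0 → z = z' := by decide
  exact hadd z z' hsum

theorem ofBinary_bijective (hF : Nat.card F = 4) {α : F} (hα : α ^ 2 = α + 1) :
    Function.Bijective (ofBinary α) := by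
  have : Finite F := Nat.finite_of_card_ne_zero (by rw [hF]; norm_num)
  refine (ofBinary_injective hα).bijective_of_nat_card_le ?_
  simp [hF]

theorem ofBinary_hexModel {α : F} (hα : α ^ 2 = α + 1) (b v w : ZMod 2 × ZMod 2) :
    (fun i => ofBinary α (hexModel b v w i)) =
      ofBinary α b • hexRow α 0 + ofBinary α v • hexRow α 1 + ofBinary α w • hexRow α 2 := by
  funext i
  fin_cases i <;>
    simp [hexModel, hexRow, ofBinary_add, ofBinary_mulAlpha hα] <;> ring

theorem four_le_hammingNorm_of_mem_hexacode (hF : Nat.card F = 4) {α : F}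
    (hα : α ^ 2 = α + 1) {h : Fin 6 → F} (hh : h ∈ hexacode α) (h0 : h ≠ 0) :
    4 ≤ hammingNorm h := by
  obtain ⟨c, rfl⟩ := (Submodule.mem_span_range_iff_exists_fun F).mp hh
  obtain ⟨z, hz⟩ := (ofBinary_bijective hF hα).2.comp_left c
  have hmodel : ∑ i, c i • hexRow α i = fun i => ofBinary α (hexModel (z 0) (z 1) (z 2) i) := by
    rw [ofBinary_hexModel hα, Fin.sum_univ_three, ← hz]
    rfl
  have hzero : ofBinary α 0 = 0 := by simp [ofBinary]
  rw [hmodel] at h0 ⊢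
  rw [hammingNorm_comp (fun _ => ofBinary α) (fun _ => ofBinary_injective hα) (fun _ => hzero)]
  exact four_le_hammingNorm_hexModel _ _ _ (fun h => h0 (funext fun i => by simp [h, hzero]))

end Hexacode

namespace RChain

variable {F : Type*} [Field F]

local notation "ε" => AdjoinRoot.root (X ^ 2 : F[X])
local notation "ι" => algebraMap F (RChain F)

noncomputable def liftedHexacode (α : F) : Submodule (RChain F) (Fin 6 → RChain F) :=
  Submodule.span (RChain F)
    {![1, ι α, 1, ι α, ι α, 1], ![0, ε, 0, ε, (ι α + 1) * ε, ι α * ε], ![0, 0, ε, ε, ε, ε]}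

theorem liftedHexacode_eq_span_mkVec (α : F) :
    liftedHexacode α = Submodule.span (RChain F)
      {mkVec (hexRow α 0) 0, mkVec 0 (hexRow α 1), mkVec 0 (hexRow α 2)} := by
  have h₀ : mkVec (hexRow α 0) 0 = ![1, ι α, 1, ι α, ι α, 1] := by
    funext i; fin_cases i <;> simp [mkVec, hexRow]
  have h₁ : mkVec 0 (hexRow α 1) = ![0, ε, 0, ε, (ι α + 1) * ε, ι α * ε] := by
    funext i; fin_cases i <;> simp [mkVec, hexRow]
  have h₂ : mkVec 0 (hexRow α 2) = ![0, 0, ε, ε, ε, ε] := by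
    funext i; fin_cases i <;> simp [mkVec, hexRow]
  rw [h₀, h₁, h₂, liftedHexacode]

theorem mkVec_zero_mem_liftedHexacode {α : F} {h : Fin 6 → F} (hh : h ∈ hexacode α) :
    mkVec 0 h ∈ liftedHexacode α := by
  rw [liftedHexacode_eq_span_mkVec]
  induction hh using Submodule.span_induction with
  | mem h hh =>
    obtain ⟨i, rfl⟩ := hh
    fin_cases i
    · show mkVec 0 (hexRow α 0) ∈ _
      rw [← root_smul_mkVec (hexRow α 0)]
      exact Submodule.smul_mem _ ε (Submodule.subset_span (Set.mem_insert _ _))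
    · exact Submodule.subset_span (Set.mem_insert_of_mem _ (Set.mem_insert _ _))
    · exact Submodule.subset_span (Set.mem_insert_of_mem _ (Set.mem_insert_of_mem _ rfl))
  | zero =>
    rw [mkVec_zero_zero]
    exact zero_mem _
  | add h h' _ _ hh hh' => simpa [mkVec_add] using add_mem hh hh'
  | smul t h _ hh =>
    have := Submodule.smul_mem _ (ι t) hh
    rwa [algebraMap_smul_mkVec, smul_zero] at this

theorem mkVec_hexRow_zero_mem (α : F) : mkVec (hexRow α 0) 0 ∈ liftedHexacode α := by
  rw [liftedHexacode_eq_span_mkVec]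
  exact Submodule.subset_span (Set.mem_insert _ _)

theorem mkVec_zero_hexRow_two_mem (α : F) : mkVec 0 (hexRow α 2) ∈ liftedHexacode α :=
  mkVec_zero_mem_liftedHexacode (Submodule.subset_span ⟨2, rfl⟩)

theorem mem_liftedHexacode_iff (α : F) {c : Fin 6 → RChain F} :
    c ∈ liftedHexacode α ↔ ∃ a : F, ∃ h ∈ hexacode α, c = mkVec (a • hexRow α 0) h := by
  constructor
  · intro hc
    rw [liftedHexacode_eq_span_mkVec] at hc
    induction hc using Submodule.span_induction with
    | mem c hc =>
      rcases hc with rfl | rfl | rfl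
      · exact ⟨1, 0, zero_mem _, by rw [one_smul]⟩
      · exact ⟨0, _, Submodule.subset_span ⟨1, rfl⟩, by rw [zero_smul]⟩
      · exact ⟨0, _, Submodule.subset_span ⟨2, rfl⟩, by rw [zero_smul]⟩
    | zero => exact ⟨0, 0, zero_mem _, by rw [zero_smul, mkVec_zero_zero]⟩
    | add c d _ _ hc hd =>
      obtain ⟨a, h, hh, rfl⟩ := hc
      obtain ⟨a', h', hh', rfl⟩ := hd
      exact ⟨a + a', h + h', add_mem hh hh', by rw [mkVec_add, add_smul]⟩
    | smul r c _ hc =>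
      obtain ⟨a, h, hh, rfl⟩ := hc
      have hrow : hexRow α 0 ∈ hexacode α := Submodule.subset_span ⟨0, rfl⟩
      refine ⟨coeff 0 r * a, coeff 0 r • h + (coeff 1 r * a) • hexRow α 0,
        add_mem (Submodule.smul_mem _ _ hh) (Submodule.smul_mem _ _ hrow), ?_⟩
      rw [smul_mkVec, smul_smul, smul_smul]
  · rintro ⟨a, h, hh, rfl⟩
    have hsplit : mkVec (a • hexRow α 0) h = ι a • mkVec (hexRow α 0) 0 + mkVec 0 h := by
      rw [algebraMap_smul_mkVec, mkVec_add, smul_zero, add_zero, zero_add]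
    rw [hsplit]
    exact add_mem (Submodule.smul_mem _ _ (mkVec_hexRow_zero_mem α))
      (mkVec_zero_mem_liftedHexacode hh)

/-- On `mkVec (a • e₀) (b • e₀ + v • e₁ + w • e₂)`, with `eᵢ = hexRow α i`, this is `(a, v, w)`:
coordinates on `liftedHexacode α` modulo `ε • liftedHexacode α`. -/
noncomputable def residueCoords (α : F) (c : Fin 6 → RChain F) : Fin 3 → F :=
  ![coeff 0 (c 0), coeff 1 (c 1) - α * coeff 1 (c 0), coeff 1 (c 2) - coeff 1 (c 0)]

theorem residueCoords_add (α : F) (c d : Fin 6 → RChain F) :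
    residueCoords α (c + d) = residueCoords α c + residueCoords α d := by
  funext i
  fin_cases i <;> simp [residueCoords] <;> ring

theorem residueCoords_mkVec (α a : F) (h : Fin 6 → F) :
    residueCoords α (mkVec (a • hexRow α 0) h) = ![a, h 1 - α * h 0, h 2 - h 0] := by
  simp [residueCoords, hexRow]

theorem residueCoords_smul {α : F} {c : Fin 6 → RChain F} (hc : c ∈ liftedHexacode α)
    (r : RChain F) :
    residueCoords α (r • c) = coeff 0 r • residueCoords α c := by
  obtain ⟨a, h, -, rfl⟩ := (mem_liftedHexacode_iff α).mp hc
  rw [smul_mkVec, smul_smul, residueCoords_mkVec, residueCoords_mkVec]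
  funext i
  fin_cases i <;> simp [hexRow] <;> ring

theorem three_le_card_of_span_eq_liftedHexacode {α : F} {S : Finset (Fin 6 → RChain F)}
    (hS : Submodule.span (RChain F) (S : Set (Fin 6 → RChain F)) = liftedHexacode α) :
    3 ≤ S.card := by
  set V := Submodule.span F (S.image (residueCoords α) : Set (Fin 3 → F))
  have hmem : ∀ c ∈ liftedHexacode α, residueCoords α c ∈ V := by
    intro c hc
    rw [← hS] at hc
    induction hc using Submodule.span_induction with
    | mem c hc => exact Submodule.subset_span (Finset.mem_image_of_mem _ hc)
    | zero =>
      convert V.zero_mem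
      funext i
      fin_cases i <;> simp [residueCoords]
    | add c d _ _ hc hd => rw [residueCoords_add]; exact V.add_mem hc hd
    | smul r c hc' hc => rw [residueCoords_smul (hS ▸ hc')]; exact V.smul_mem _ hc
  have htop : V = ⊤ := by
    rw [eq_top_iff, ← (Pi.basisFun F (Fin 3)).span_eq, Submodule.span_le]
    rintro _ ⟨i, rfl⟩
    obtain ⟨a, h, hh, hc⟩ : ∃ a : F, ∃ h ∈ hexacode α,
        residueCoords α (mkVec (a • hexRow α 0) h) = Pi.basisFun F (Fin 3) i := by
      fin_cases i
      · exact ⟨1, 0, zero_mem _, by rw [residueCoords_mkVec]; funext j; fin_cases j <;> simp⟩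
      · exact ⟨0, _, Submodule.subset_span ⟨1, rfl⟩, by
          rw [residueCoords_mkVec]; funext j; fin_cases j <;> simp [hexRow]⟩
      · exact ⟨0, _, Submodule.subset_span ⟨2, rfl⟩, by
          rw [residueCoords_mkVec]; funext j; fin_cases j <;> simp [hexRow]⟩
    exact hc ▸ hmem _ ((mem_liftedHexacode_iff α).mpr ⟨a, h, hh, rfl⟩)
  calc 3 = Module.finrank F V := by rw [htop, finrank_top]; simp
    _ ≤ (S.image (residueCoords α)).card := finrank_span_finset_le_card _
    _ ≤ S.card := Finset.card_image_le

theorem isCodeRank_liftedHexacode (α : F) : IsCodeRank (liftedHexacode α) 3 := by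
  refine ⟨⟨{mkVec (hexRow α 0) 0, mkVec 0 (hexRow α 1), mkVec 0 (hexRow α 2)}, ?_, ?_⟩,
    fun k ⟨S, hk, hS⟩ => hk ▸ three_le_card_of_span_eq_liftedHexacode hS⟩
  · refine Finset.card_eq_three.mpr ⟨_, _, _, ?_, ?_, ?_, rfl⟩ <;>
      (rw [Ne, mkVec_inj]; simp [funext_iff, Fin.forall_fin_succ, hexRow])
  · simp [liftedHexacode_eq_span_mkVec]

theorem wtHomV_mkVec_zero_hexRow_two (α : F) :
    wtHomV ε 2 4 (mkVec 0 (hexRow α 2)) = 16 / 3 := by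
  have hnorm : hammingNorm (hexRow α 2) = 4 := by
    simp [hammingNorm, Finset.card_filter, Fin.sum_univ_six, hexRow]
  rw [wtHomV_mkVec_zero, hnorm]
  norm_num

theorem sixteen_div_three_le_wtHomV [CharP F 2] (hF : Nat.card F = 4) {α : F}
    (hα : α ^ 2 = α + 1) {c : Fin 6 → RChain F} (hc : c ∈ liftedHexacode α) (hc0 : c ≠ 0) :
    16 / 3 ≤ wtHomV ε 2 4 c := by
  obtain ⟨a, h, hh, rfl⟩ := (mem_liftedHexacode_iff α).mp hc
  by_cases ha : a = 0
  · subst ha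
    rw [zero_smul] at hc0 ⊢
    have h0 : h ≠ 0 := by
      rintro rfl
      exact hc0 (mkVec_zero_zero)
    have h4 : (4 : ℚ) ≤ hammingNorm h := by
      exact_mod_cast four_le_hammingNorm_of_mem_hexacode hF hα hh h0
    rw [wtHomV_mkVec_zero]
    linarith
  · have hα0 : α ≠ 0 := by
      rintro rfl
      simp at hα
    rw [wtHomV_mkVec_of_forall_ne_zero (fun i => by fin_cases i <;> simp [hexRow, ha, hα0])]
    norm_num

end RChain

/-- Over `R = F₄[x]/(x²)` the code generated by `(1,α,1,α,α,1)`,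
`(0,x,0,x,(α+1)x,αx)`, `(0,0,x,x,x,x)` has rank 3, minimum homogeneous distance `16/3`,
is MHD, and is not contained in `⟨x⟩⁶`. -/
theorem mhd_exceptional_example {F : Type*} [Field F] (hF : Nat.card F = 4)
    (α : F) (hα : α ^ 2 = α + 1) :
    IsCodeRank (Submodule.span (RChain F)
        {![1, algebraMap F (RChain F) α, 1, algebraMap F (RChain F) α,
            algebraMap F (RChain F) α, 1],
         ![0, AdjoinRoot.root _, 0, AdjoinRoot.root _,
            (algebraMap F (RChain F) α + 1) * AdjoinRoot.root _,
            algebraMap F (RChain F) α * AdjoinRoot.root _],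
         ![0, 0, AdjoinRoot.root _, AdjoinRoot.root _, AdjoinRoot.root _,
            AdjoinRoot.root _]}) 3 ∧
    IsLeast {w : ℚ | ∃ c ∈ Submodule.span (RChain F)
        {![1, algebraMap F (RChain F) α, 1, algebraMap F (RChain F) α,
            algebraMap F (RChain F) α, 1],
         ![0, AdjoinRoot.root _, 0, AdjoinRoot.root _,
            (algebraMap F (RChain F) α + 1) * AdjoinRoot.root _,
            algebraMap F (RChain F) α * AdjoinRoot.root _],
         ![0, 0, AdjoinRoot.root _, AdjoinRoot.root _, AdjoinRoot.root _,
            AdjoinRoot.root _]},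
        c ≠ 0 ∧ wtHomV (AdjoinRoot.root _) 2 4 c = w} (16 / 3 : ℚ) ∧
    (∀ c ∈ Submodule.span (RChain F)
        {![1, algebraMap F (RChain F) α, 1, algebraMap F (RChain F) α,
            algebraMap F (RChain F) α, 1],
         ![0, AdjoinRoot.root _, 0, AdjoinRoot.root _,
            (algebraMap F (RChain F) α + 1) * AdjoinRoot.root _,
            algebraMap F (RChain F) α * AdjoinRoot.root _],
         ![0, 0, AdjoinRoot.root _, AdjoinRoot.root _, AdjoinRoot.root _,
            AdjoinRoot.root _]},
        c ≠ 0 → (4 : ℚ) / 3 * ((6 : ℚ) - 3) < wtHomV (AdjoinRoot.root _) 2 4 c) ∧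
    (∃ c ∈ Submodule.span (RChain F)
        {![1, algebraMap F (RChain F) α, 1, algebraMap F (RChain F) α,
            algebraMap F (RChain F) α, 1],
         ![0, AdjoinRoot.root _, 0, AdjoinRoot.root _,
            (algebraMap F (RChain F) α + 1) * AdjoinRoot.root _,
            algebraMap F (RChain F) α * AdjoinRoot.root _],
         ![0, 0, AdjoinRoot.root _, AdjoinRoot.root _, AdjoinRoot.root _,
            AdjoinRoot.root _]},
        ∃ i, c i ∉ Ideal.span {(AdjoinRoot.root (Polynomial.X ^ 2 : Polynomial F))}) := by
  have := charP_two_of_nat_card_eq_four hF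
  have hmin : ∀ c ∈ RChain.liftedHexacode α, c ≠ 0 → 16 / 3 ≤ wtHomV (AdjoinRoot.root _) 2 4 c :=
    fun c hc hc0 => RChain.sixteen_div_three_le_wtHomV hF hα hc hc0
  refine ⟨RChain.isCodeRank_liftedHexacode α,
    ⟨⟨_, RChain.mkVec_zero_hexRow_two_mem α, ?_, RChain.wtHomV_mkVec_zero_hexRow_two α⟩, ?_⟩,
    fun c hc hc0 => by linarith [hmin c hc hc0],
    ⟨_, RChain.mkVec_hexRow_zero_mem α, 0, ?_⟩⟩
  · rw [Ne, RChain.mkVec_eq_zero_iff]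
    simp [funext_iff, Fin.forall_fin_succ, hexRow]
  · rintro _ ⟨c, hc, hc0, rfl⟩
    exact hmin c hc hc0
  · rw [RChain.mkVec_apply_mem_span_root_iff]
    simp [hexRow]
end

section
/- Let R = ℤ/4ℤ, a finite chain ring with maximal ideal ⟨2⟩, nilpotency index s = 2, residue field of size q = 2, and M = 2. Let C ⊆ R⁴ be the linear code generated by the rows (1, 1, 1, 1), (0, 1, 0, 1), (0, 0, 2, 2). Then C has rank 3 and its socle C₀ = C ∩ ⟨2⟩⁴ is an MDS code (every nonzero element of C₀ has Hamming weight at least 2 = 4 − 3 + 1 and |C₀| = 2³), yet C is not MHD: d_Hom(C) ≤ 2 = M·(4 − 3). -/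
open scoped BigOperators Classical

/-!
The code is `{a (1,1,1,1) + b (0,1,0,1) + e (0,0,2,2)}`, a set of 32 words. A module generated
by `k` elements over `ℤ/4ℤ` has at most `4 ^ k` elements, and `4 ^ 2 < 32`, so the code has
rank 3. Its socle, the eight `{0, 2}`-valued codewords, and the Hamming weights of these are
found by enumeration; the nonzero codeword `(0,1,0,1)` has homogeneous weight `1 + 1 = 2`.
-/

theorem Submodule.natCard_span_finset_le {R M : Type*} [Semiring R] [Finite R] [AddCommMonoid M]
    [Module R M] (S : Finset M) :
    Nat.card (Submodule.span R (S : Set M)) ≤ Nat.card R ^ S.card := by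
  rw [← Subtype.range_coe (s := (S : Set M)), ← Fintype.range_linearCombination]
  exact (Finite.card_range_le _).trans_eq (by simp [Nat.card_fun])

theorem isCodeRank_of_natCard_pow_lt {R : Type*} [CommRing R] [Finite R] {n : ℕ}
    {C : Submodule R (Fin n → R)} {S : Finset (Fin n → R)}
    (hspan : Submodule.span R (S : Set (Fin n → R)) = C)
    (hcard : Nat.card R ^ (S.card - 1) < Nat.card C) : IsCodeRank C S.card := by
  refine ⟨⟨S, rfl, hspan⟩, ?_⟩
  rintro k ⟨T, rfl, hT⟩
  by_contra! hlt
  have hC := hT ▸ Submodule.natCard_span_finset_le (R := R) T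
  have hpow := Nat.pow_le_pow_right Nat.card_pos (Nat.le_sub_one_of_lt hlt) (n := Nat.card R)
  omega

theorem mem_socleCode_iff {R : Type*} [CommRing R] {γ : R} {s n : ℕ}
    {C : Submodule R (Fin n → R)} {c : Fin n → R} :
    c ∈ socleCode γ s C ↔ c ∈ C ∧ ∀ i, γ ^ (s - 1) ∣ c i := by
  simp [socleCode, Submodule.mem_pi, Ideal.mem_span_singleton]

theorem hWt_eq_card_filter {R : Type*} [Zero R] [DecidableEq R] {n : ℕ} (v : Fin n → R) :
    hWt v = (Finset.univ.filter fun i => v i ≠ 0).card := by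
  rw [hWt, Nat.card_eq_fintype_card, Fintype.card_subtype]

theorem wtHom_zero {R : Type*} [CommRing R] (γ : R) (s q : ℕ) : wtHom γ s q 0 = 0 :=
  if_pos rfl

theorem wtHom_of_notMem {R : Type*} [CommRing R] {γ : R} {s : ℕ} (q : ℕ) {x : R}
    (hx : x ∉ Ideal.span {γ ^ (s - 1)}) : wtHom γ s q x = 1 := by
  have hx0 : x ≠ 0 := by rintro rfl; exact hx (zero_mem _)
  simp [wtHom, hx0, hx]

namespace Z4Example

theorem two_dvd_iff (x : ZMod 4) : 2 ∣ x ↔ x = 0 ∨ x = 2 := by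
  constructor
  · rintro ⟨c, rfl⟩
    revert c
    decide
  · rintro (rfl | rfl)
    exacts [⟨0, rfl⟩, ⟨1, rfl⟩]

theorem one_notMem_span_two : (1 : ZMod 4) ∉ Ideal.span {2} := by
  rw [Ideal.mem_span_singleton, two_dvd_iff]
  decide

abbrev code : Submodule (ZMod 4) (Fin 4 → ZMod 4) :=
  Submodule.span (ZMod 4) {![1, 1, 1, 1], ![0, 1, 0, 1], ![0, 0, 2, 2]}

def codeword (t : Fin 3 → ZMod 4) : Fin 4 → ZMod 4 :=
  ![t 0, t 0 + t 1, t 0 + 2 * t 2, t 0 + t 1 + 2 * t 2]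

def codewords : Finset (Fin 4 → ZMod 4) := Finset.univ.image codeword

def socle : Finset (Fin 4 → ZMod 4) := codewords.filter fun c => ∀ i, c i = 0 ∨ c i = 2

theorem coe_code : (code : Set (Fin 4 → ZMod 4)) = codewords := by
  have hgen : ({![1, 1, 1, 1], ![0, 1, 0, 1], ![0, 0, 2, 2]} : Set (Fin 4 → ZMod 4)) =
      Set.range ![![1, 1, 1, 1], ![0, 1, 0, 1], ![0, 0, 2, 2]] := by
    simp only [Matrix.range_cons, Matrix.range_empty, Set.union_empty, Set.singleton_union]
  ext c
  rw [SetLike.mem_coe, code, hgen, Submodule.mem_span_range_iff_exists_fun, codewords,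
    Finset.coe_image, Finset.coe_univ, Set.image_univ]
  refine exists_congr fun t => Eq.congr_left ?_
  ext j
  fin_cases j <;> simp [codeword, Fin.sum_univ_three] <;> ring

theorem coe_socleCode : (socleCode (2 : ZMod 4) 2 code : Set (Fin 4 → ZMod 4)) = socle := by
  ext c
  rw [SetLike.mem_coe, mem_socleCode_iff, ← SetLike.mem_coe, coe_code]
  simp [socle, two_dvd_iff]

set_option maxRecDepth 100000 in
theorem card_codewords : codewords.card = 32 := by decide

theorem card_socle : socle.card = 8 := by decide

set_option maxRecDepth 100000 in
theorem two_le_card_support_of_mem_socle :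
    ∀ c ∈ socle, c ≠ 0 → 2 ≤ (Finset.univ.filter fun i => c i ≠ 0).card := by
  decide

theorem natCard_code : Nat.card code = 32 := by
  rw [← SetLike.coe_sort_coe, coe_code, Finset.coe_sort_coe, Nat.card_eq_finsetCard,
    card_codewords]

theorem natCard_socleCode : Nat.card (socleCode (2 : ZMod 4) 2 code) = 8 := by
  rw [← SetLike.coe_sort_coe, coe_socleCode, Finset.coe_sort_coe, Nat.card_eq_finsetCard,
    card_socle]

theorem wtHomV_zero_one_zero_one : wtHomV (2 : ZMod 4) 2 2 ![0, 1, 0, 1] = 2 := by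
  have hone : wtHom (2 : ZMod 4) 2 2 1 = 1 :=
    wtHom_of_notMem 2 (by simpa using one_notMem_span_two)
  rw [wtHomV, Fin.sum_univ_four]
  change wtHom _ _ _ 0 + wtHom _ _ _ 1 + wtHom _ _ _ 0 + wtHom _ _ _ 1 = 2
  rw [wtHom_zero, hone]
  norm_num

end Z4Example

/-- Over `ℤ/4ℤ` the code generated by `(1,1,1,1)`, `(0,1,0,1)`, `(0,0,2,2)` has rank 3
and MDS socle, but is not MHD. -/
theorem not_mhd_example_zmod4 :
    IsCodeRank (Submodule.span (ZMod 4) {![1, 1, 1, 1], ![0, 1, 0, 1], ![0, 0, 2, 2]}) 3 ∧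
    (∀ c ∈ socleCode (2 : ZMod 4) 2
        (Submodule.span (ZMod 4) {![1, 1, 1, 1], ![0, 1, 0, 1], ![0, 0, 2, 2]}),
        c ≠ 0 → 2 ≤ hWt c) ∧
    Nat.card (socleCode (2 : ZMod 4) 2
        (Submodule.span (ZMod 4) {![1, 1, 1, 1], ![0, 1, 0, 1], ![0, 0, 2, 2]})) = 2 ^ 3 ∧
    (∃ c ∈ Submodule.span (ZMod 4) {![1, 1, 1, 1], ![0, 1, 0, 1], ![0, 0, 2, 2]},
        c ≠ 0 ∧ wtHomV (2 : ZMod 4) 2 2 c ≤ 2) := by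
  have hgen :
      ({![1, 1, 1, 1], ![0, 1, 0, 1], ![0, 0, 2, 2]} : Finset (Fin 4 → ZMod 4)).card = 3 := by
    decide
  have hrank : Nat.card (ZMod 4) ^ (3 - 1) < Nat.card Z4Example.code := by
    rw [Z4Example.natCard_code, Nat.card_zmod]
    norm_num
  refine ⟨hgen ▸ isCodeRank_of_natCard_pow_lt (by simp) (hgen ▸ hrank), fun c hc hc0 => ?_,
    Z4Example.natCard_socleCode, ![0, 1, 0, 1], Submodule.subset_span (by simp), by decide,
    Z4Example.wtHomV_zero_one_zero_one.le⟩
  rw [hWt_eq_card_filter]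
  refine Z4Example.two_le_card_support_of_mem_socle c ?_ hc0
  rwa [← Finset.mem_coe, ← Z4Example.coe_socleCode]
end

section
/- Let R be a finite commutative chain ring with maximal ideal ⟨γ⟩, nilpotency index s, and residue field of size q. For every nonzero ideal I of R, the sum of the homogeneous weights of the elements of I equals the cardinality of I: Σ_{x ∈ I} wt_Hom(x) = |I|. -/
open scoped BigOperators Classical

/-!
Every nonzero element `x` of the chain ring divides `γ ^ (s - 1)`: write `x = γ ^ k * c` with `k`
maximal, then `c` is a unit. Hence every nonzero ideal `I` contains the minimal ideal
`⟨γ ^ (s - 1)⟩`, whose annihilator is the maximal ideal, so it has `q` elements. Its `q - 1`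
nonzero elements each weigh `q / (q - 1)` and contribute `q` together, while the remaining
elements of `I` all weigh `1`.
-/

open IsLocalRing

theorem finsum_mem_const_eq_ncard_smul {α M : Type*} [AddCommMonoid M] {t : Set α}
    (ht : t.Finite) (c : M) : ∑ᶠ x ∈ t, c = t.ncard • c := by
  rw [finsum_mem_eq_finite_toFinset_sum _ ht, Finset.sum_const, Set.ncard_eq_toFinset_card t ht]

section ChainRing

variable {R : Type*} [CommRing R] [IsLocalRing R] {γ : R} {s : ℕ}

theorem dvd_pow_pred_of_pow_dvd (hmax : maximalIdeal R = Ideal.span {γ}) (hnil : γ ^ s = 0)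
    {x : R} (hx : x ≠ 0) {k : ℕ} (hk : γ ^ k ∣ x) : x ∣ γ ^ (s - 1) := by
  have hks : k < s := by
    by_contra! h
    exact hx (zero_dvd_iff.mp (hnil ▸ (pow_dvd_pow γ h).trans hk))
  obtain ⟨c, rfl⟩ := hk
  by_cases hc : IsUnit c
  · exact hc.mul_right_dvd.mpr (pow_dvd_pow γ (by omega))
  · have hγc : γ ∣ c := Ideal.mem_span_singleton.mp (hmax ▸ hc)
    exact dvd_pow_pred_of_pow_dvd hmax hnil hx (pow_succ γ k ▸ mul_dvd_mul_left _ hγc)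
termination_by s - k

theorem span_pow_pred_le_of_ne_bot (hmax : maximalIdeal R = Ideal.span {γ}) (hnil : γ ^ s = 0)
    {I : Ideal R} (hI : I ≠ ⊥) : Ideal.span {γ ^ (s - 1)} ≤ I := by
  obtain ⟨x, hxI, hx⟩ := Submodule.exists_mem_ne_zero_of_ne_bot hI
  rw [Ideal.span_singleton_le_iff_mem]
  exact I.mem_of_dvd (dvd_pow_pred_of_pow_dvd hmax hnil hx (k := 0) (by simp)) hxI

theorem torsionOf_pow_pred_eq_maximalIdeal (hmax : maximalIdeal R = Ideal.span {γ})
    (hnil : γ ^ s = 0) (hnil' : γ ^ (s - 1) ≠ 0) :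
    Ideal.torsionOf R R (γ ^ (s - 1)) = maximalIdeal R := by
  have hs : s ≠ 0 := by rintro rfl; simp at hnil
  refine ((maximalIdeal.isMaximal R).eq_of_le ?_ ?_).symm
  · rwa [Ne, Ideal.torsionOf_eq_top_iff]
  · rw [hmax, Ideal.span_singleton_le_iff_mem, Ideal.mem_torsionOf_iff, smul_eq_mul,
      ← pow_succ', Nat.sub_add_cancel (Nat.one_le_iff_ne_zero.mpr hs), hnil]

theorem card_span_pow_pred (hmax : maximalIdeal R = Ideal.span {γ}) (hnil : γ ^ s = 0)
    (hnil' : γ ^ (s - 1) ≠ 0) :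
    Nat.card (Ideal.span {γ ^ (s - 1)}) = Nat.card (R ⧸ maximalIdeal R) := by
  rw [← torsionOf_pow_pred_eq_maximalIdeal hmax hnil hnil']
  exact (Nat.card_congr (Ideal.quotTorsionOfEquivSpanSingleton R R _).toEquiv).symm

end ChainRing

section Weight

variable {R : Type*} [CommRing R] [Finite R] {γ : R} {s q : ℕ}

theorem finsum_mem_wtHom_span_pow_pred (hq : Nat.card (Ideal.span {γ ^ (s - 1)}) = q)
    (hnil' : γ ^ (s - 1) ≠ 0) :
    ∑ᶠ x ∈ (Ideal.span {γ ^ (s - 1)} : Set R), wtHom γ s q x = q := by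
  set J : Ideal R := Ideal.span {γ ^ (s - 1)}
  have : Nontrivial J :=
    Submodule.nontrivial_iff_ne_bot.mpr (by simpa [J, Ideal.span_singleton_eq_bot])
  have hq1 : 1 < q := hq ▸ Finite.one_lt_card
  have hJ : (J : Set R).ncard = q := by rw [← hq]; exact (Nat.card_coe_set_eq _).symm
  rw [← finsum_mem_add_sdiff (Set.singleton_subset_iff.mpr J.zero_mem) (J : Set R).toFinite,
    finsum_mem_singleton, finsum_mem_congr rfl (g := fun _ => (q : ℚ) / (q - 1)),
    finsum_mem_const_eq_ncard_smul (Set.toFinite _).sdiff,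
    Set.ncard_sdiff_singleton_of_mem J.zero_mem, hJ]
  · have : (q : ℚ) - 1 ≠ 0 := sub_ne_zero.mpr (by exact_mod_cast hq1.ne')
    rw [nsmul_eq_mul, Nat.cast_sub hq1.le]
    simp only [wtHom, ↓reduceIte, Nat.cast_one, zero_add]
    field_simp
  · rintro x ⟨hxJ, hx0 : x ≠ 0⟩
    simp [wtHom, hx0, show x ∈ Ideal.span {γ ^ (s - 1)} from hxJ]

theorem finsum_mem_wtHom_diff_span_pow_pred (t : Set R) :
    ∑ᶠ x ∈ t \ Ideal.span {γ ^ (s - 1)}, wtHom γ s q x =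
      (t \ Ideal.span {γ ^ (s - 1)}).ncard := by
  rw [finsum_mem_congr rfl (g := fun _ => (1 : ℚ)), finsum_mem_const_eq_ncard_smul, nsmul_one]
  · exact t.toFinite.sdiff
  rintro x ⟨-, hx⟩
  have hx0 : x ≠ 0 := by rintro rfl; exact hx (Submodule.zero_mem _)
  simp [wtHom, hx0, SetLike.mem_coe.not.mp hx]

end Weight

theorem sum_wtHom_ideal_general {R : Type*} [CommRing R] [IsLocalRing R] [Fintype R]
    (γ : R) (s q : ℕ)
    (hmax : IsLocalRing.maximalIdeal R = Ideal.span {γ})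
    (hnil : γ ^ s = 0) (hnil' : γ ^ (s - 1) ≠ 0)
    (hq : Nat.card (R ⧸ IsLocalRing.maximalIdeal R) = q)
    (I : Ideal R) (hI : I ≠ ⊥) :
    ∑ᶠ x ∈ (I : Set R), wtHom γ s q x = (Nat.card I : ℚ) := by
  have hJI : (Ideal.span {γ ^ (s - 1)} : Set R) ⊆ I := span_pow_pred_le_of_ne_bot hmax hnil hI
  have hJ : Nat.card (Ideal.span {γ ^ (s - 1)}) = q :=
    (card_span_pow_pred hmax hnil hnil').trans hq
  rw [← finsum_mem_add_sdiff hJI (Set.toFinite _), finsum_mem_wtHom_span_pow_pred hJ hnil',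
    finsum_mem_wtHom_diff_span_pow_pred, ← hJ, ← Nat.cast_add, add_comm]
  exact congrArg Nat.cast (Set.ncard_sdiff_add_ncard_of_subset hJI)

/-- On a nonzero ideal of a finite chain ring, the homogeneous weight has average 1:
the sum of the weights of the elements equals the cardinality of the ideal. -/
theorem sum_wtHom_ideal {R : Type*} [CommRing R] [IsLocalRing R] [Fintype R]
    (γ : R) (s q : ℕ) (hs : 1 ≤ s)
    (hmax : IsLocalRing.maximalIdeal R = Ideal.span {γ})
    (hnil : γ ^ s = 0) (hnil' : γ ^ (s - 1) ≠ 0)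
    (hq : Nat.card (R ⧸ IsLocalRing.maximalIdeal R) = q)
    (I : Ideal R) (hI : I ≠ ⊥) :
    ∑ᶠ x ∈ (I : Set R), wtHom γ s q x = (Nat.card I : ℚ) :=
  sum_wtHom_ideal_general γ s q hmax hnil hnil' hq I hI
end

section
/- Let R be a finite commutative chain ring with maximal ideal ⟨γ⟩, nilpotency index s, and residue field of size q. Fix nonnegative integers k₀, …, k_{s−1}, not all zero, set K = Σ_{i=0}^{s−1} k_i and let V = R^{k₀} × ⟨γ⟩^{k₁} × ⋯ × ⟨γ^{s−1}⟩^{k_{s−1}} ⊆ R^K. For x ∈ R^K define φ_x : V → R by φ_x(v) = Σ_{i=1}^K v_i x_i, and let c_x ∈ R^{|V|−1} be the vector (φ_x(v))_{v ∈ V \ {0}}. Then for every x ∈ R^K with c_x ≠ 0, the homogeneous weight of c_x equals |V|. In particular, the linear code {c_x : x ∈ R^K} ⊆ R^{|V|−1} has constant homogeneous weight |V|. -/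
open scoped BigOperators Classical

section AuxChain
variable {R : Type*} [CommRing R] [IsLocalRing R]

lemma exists_unit_pow (γ : R) (s : ℕ)
    (hmax : IsLocalRing.maximalIdeal R = Ideal.span {γ})
    (hnil : γ ^ s = 0) {x : R} (hx : x ≠ 0) :
    ∃ i < s, ∃ u : Rˣ, x = ↑u * γ ^ i := by
  have hps : ¬ γ ^ s ∣ x := by
    rw [hnil, zero_dvd_iff]; exact hx
  have hex : ∃ n, ¬ γ ^ n ∣ x := ⟨s, hps⟩
  set m := Nat.find hex with hm
  have hspec : ¬ γ ^ m ∣ x := Nat.find_spec hex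
  have hm0 : m ≠ 0 := by
    intro h
    exact hspec (by rw [h, pow_zero]; exact one_dvd x)
  have hms : m ≤ s := Nat.find_le hps
  have hlt : m - 1 < m := Nat.sub_lt (Nat.pos_of_ne_zero hm0) one_pos
  have hdvd : γ ^ (m - 1) ∣ x := by
    by_contra h; exact absurd (Nat.find_min hex hlt) (by simpa using h)
  obtain ⟨c, hc⟩ := hdvd
  have hcu : IsUnit c := by
    by_contra hcu
    have : c ∈ IsLocalRing.maximalIdeal R := hcu
    rw [hmax, Ideal.mem_span_singleton] at this
    obtain ⟨d, hd⟩ := this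
    apply hspec
    refine ⟨d, ?_⟩
    rw [hc, hd, ← mul_assoc, ← pow_succ]
    congr 2
    omega
  obtain ⟨u, hu⟩ := hcu
  exact ⟨m - 1, by omega, u, by rw [hc, hu, mul_comm]⟩

lemma socle_le (γ : R) (s : ℕ) (hs : 1 ≤ s)
    (hmax : IsLocalRing.maximalIdeal R = Ideal.span {γ})
    (hnil : γ ^ s = 0) {I : Ideal R} (hI : I ≠ ⊥) :
    Ideal.span {γ ^ (s - 1)} ≤ I := by
  obtain ⟨x, hxI, hx⟩ := Submodule.exists_mem_ne_zero_of_ne_bot hI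
  obtain ⟨i, his, u, hu⟩ := exists_unit_pow γ s hmax hnil hx
  have key : γ ^ (s - 1) = ↑u⁻¹ * (γ ^ (s - 1 - i) * x) := by
    rw [hu]
    have h1 : (↑u⁻¹ : R) * ↑u = 1 := u.inv_mul
    calc γ ^ (s-1) = ((↑u⁻¹:R) * ↑u) * (γ^(s-1-i) * γ^i) := by
          rw [h1, one_mul, ← pow_add, show s-1-i+i = s-1 by omega]
      _ = ↑u⁻¹ * (γ^(s-1-i) * (↑u * γ^i)) := by ring
  rw [Ideal.span_le, Set.singleton_subset_iff]
  rw [key]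
  exact Ideal.mul_mem_left _ _ (Ideal.mul_mem_left _ _ hxI)


variable [Fintype R]



lemma card_socle (γ : R) (s q : ℕ) (hs : 1 ≤ s)
    (hmax : IsLocalRing.maximalIdeal R = Ideal.span {γ})
    (hnil : γ ^ s = 0) (hnil' : γ ^ (s - 1) ≠ 0)
    (hq : Nat.card (R ⧸ IsLocalRing.maximalIdeal R) = q) :
    Nat.card (Ideal.span {γ ^ (s - 1)} : Ideal R) = q := by
  set f : R →ₗ[R] R := LinearMap.toSpanSingleton R R (γ ^ (s - 1)) with hf
  have hrange : LinearMap.range f = Ideal.span {γ ^ (s - 1)} :=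
    (LinearMap.span_singleton_eq_range R R (γ ^ (s-1))).symm
  have hker : LinearMap.ker f = IsLocalRing.maximalIdeal R := by
    ext r
    simp only [LinearMap.mem_ker, hf, LinearMap.toSpanSingleton_apply, smul_eq_mul]
    constructor
    · intro h
      by_contra hr
      have hu : IsUnit r := by
        by_contra hu
        exact hr (hu : r ∈ IsLocalRing.maximalIdeal R)
      obtain ⟨u, rfl⟩ := hu
      apply hnil'
      calc γ ^ (s-1) = ↑u⁻¹ * (↑u * γ ^ (s-1)) := by
            rw [← mul_assoc, Units.inv_mul, one_mul]
        _ = 0 := by rw [h, mul_zero]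
    · intro h
      rw [hmax, Ideal.mem_span_singleton] at h
      obtain ⟨d, rfl⟩ := h
      calc γ * d * γ ^ (s-1) = d * γ ^ (1 + (s-1)) := by rw [pow_add, pow_one]; ring
        _ = 0 := by rw [show 1 + (s-1) = s by omega, hnil, mul_zero]
  have e := (f.quotKerEquivRange).toEquiv
  rw [← hq, ← hrange]
  rw [← Nat.card_congr e, hker]


lemma two_le_q (hq : Nat.card (R ⧸ IsLocalRing.maximalIdeal R) = q) : 2 ≤ q := by
  have : (IsLocalRing.maximalIdeal R).IsMaximal := IsLocalRing.maximalIdeal.isMaximal R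
  have : Nontrivial (R ⧸ IsLocalRing.maximalIdeal R) := Ideal.Quotient.nontrivial_iff.mpr this.ne_top
  have hfin : Finite (R ⧸ IsLocalRing.maximalIdeal R) :=
    Finite.of_surjective _ (Ideal.Quotient.mk_surjective)
  rw [← hq]
  exact Finite.one_lt_card_iff_nontrivial.mpr this

lemma sum_wt_ideal (γ : R) (s q : ℕ) (hs : 1 ≤ s)
    (hmax : IsLocalRing.maximalIdeal R = Ideal.span {γ})
    (hnil : γ ^ s = 0) (hnil' : γ ^ (s - 1) ≠ 0)
    (hq : Nat.card (R ⧸ IsLocalRing.maximalIdeal R) = q)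
    {I : Ideal R} (hI : I ≠ ⊥) :
    ∑ y ∈ (I : Set R).toFinset, wtHom γ s q y = ((I : Set R).toFinset.card : ℚ) := by
  set soc : Ideal R := Ideal.span {γ ^ (s - 1)} with hsoc
  have hq2 : 2 ≤ q := two_le_q hq
  have hle : soc ≤ I := socle_le γ s hs hmax hnil hI
  set F := (I : Set R).toFinset with hF
  set S := (soc : Set R).toFinset with hS
  have hScard : S.card = q := by
    rw [hS, Set.toFinset_card, ← Nat.card_eq_fintype_card]
    exact card_socle γ s q hs hmax hnil hnil' hq
  have hSF : S ⊆ F := by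
    intro y hy
    rw [hS, Set.mem_toFinset] at hy
    rw [hF, Set.mem_toFinset]
    exact hle hy
  have h0S : (0 : R) ∈ S := by rw [hS, Set.mem_toFinset]; exact soc.zero_mem
  have hfil : F.filter (fun y => y ∈ soc) = S := by
    ext y
    simp only [Finset.mem_filter, hF, hS, Set.mem_toFinset, SetLike.mem_coe]
    exact ⟨fun h => h.2, fun h => ⟨hle h, h⟩⟩
  rw [← Finset.sum_filter_add_sum_filter_not F (fun y => y ∈ soc), hfil]
  have h1 : ∑ y ∈ S, wtHom γ s q y = (q : ℚ) := by
    have he : ∀ y ∈ S.erase 0, wtHom γ s q y = (q : ℚ) / ((q:ℚ) - 1) := by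
      intro y hy
      rw [Finset.mem_erase, hS, Set.mem_toFinset, SetLike.mem_coe] at hy
      unfold wtHom
      rw [if_neg hy.1, if_pos (show y ∈ Ideal.span {γ ^ (s-1)} from hy.2)]
    rw [← Finset.sum_erase_add S _ h0S]
    rw [Finset.sum_congr rfl he, Finset.sum_const, Finset.card_erase_of_mem h0S, hScard]
    have hwt0 : wtHom γ s q 0 = 0 := by unfold wtHom; rw [if_pos rfl]
    rw [hwt0, add_zero, nsmul_eq_mul]
    have hqne : (q : ℚ) - 1 ≠ 0 := by
      have : (1:ℚ) < (q:ℚ) := by exact_mod_cast hq2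
      linarith
    push_cast [Nat.cast_sub (by omega : 1 ≤ q)]
    field_simp
  have h2 : ∑ y ∈ F.filter (fun y => ¬ y ∈ soc), wtHom γ s q y
      = ((F.card : ℚ) - q) := by
    have he : ∀ y ∈ F.filter (fun y => ¬ y ∈ soc), wtHom γ s q y = 1 := by
      intro y hy
      rw [Finset.mem_filter] at hy
      have hy0 : y ≠ 0 := fun h => hy.2 (h ▸ soc.zero_mem)
      unfold wtHom
      rw [if_neg hy0, if_neg (show ¬ y ∈ Ideal.span {γ ^ (s-1)} from hy.2)]
    rw [Finset.sum_congr rfl he, Finset.sum_const, nsmul_eq_mul, mul_one]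
    have := Finset.card_filter_add_card_filter_not (s := F) (p := fun y => y ∈ soc)
    rw [hfil] at this
    have hcard : (F.filter (fun y => ¬ y ∈ soc)).card = F.card - q := by omega
    rw [hcard]
    have hqF : q ≤ F.card := hScard ▸ Finset.card_le_card hSF
    push_cast [Nat.cast_sub hqF]
    ring
  rw [h1, h2]
  ring


end AuxChain


/-- The long constant weight code: for `V = R^(k₀) × ⟨γ⟩^(k₁) × ⋯ × ⟨γ^(s-1)⟩^(k_(s-1))`
(coordinates indexed by `Σ i, Fin (k i)`), every nonzero codeword `(φₓ(v))_(v ∈ V\{0})`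
has homogeneous weight exactly `|V|`. -/

theorem long_constant_weight_code {R : Type*} [CommRing R] [IsLocalRing R] [Fintype R]
    (γ : R) (s q : ℕ) (hs : 1 ≤ s)
    (hmax : IsLocalRing.maximalIdeal R = Ideal.span {γ})
    (hnil : γ ^ s = 0) (hnil' : γ ^ (s - 1) ≠ 0)
    (hq : Nat.card (R ⧸ IsLocalRing.maximalIdeal R) = q)
    (k : Fin s → ℕ) (hk : k ≠ 0) :
    ∀ x : ((i : Fin s) × Fin (k i)) → R,
      (∃ v : ((i : Fin s) × Fin (k i)) → R,
        (∀ j, v j ∈ Ideal.span {γ ^ (j.1 : ℕ)}) ∧ v ≠ 0 ∧ (∑ j, v j * x j) ≠ 0) →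
      ∑ᶠ v ∈ {v : ((i : Fin s) × Fin (k i)) → R |
          (∀ j, v j ∈ Ideal.span {γ ^ (j.1 : ℕ)}) ∧ v ≠ 0},
        wtHom γ s q (∑ j, v j * x j)
        = (Nat.card {v : ((i : Fin s) × Fin (k i)) → R |
            ∀ j, v j ∈ Ideal.span {γ ^ (j.1 : ℕ)}} : ℚ) := by
  intro x hx
  classical
  let φ : (((i : Fin s) × Fin (k i)) → R) →ₗ[R] R :=
    { toFun := fun v => ∑ j, v j * x j
      map_add' := by
        intro v w
        simp only [Pi.add_apply, add_mul]
        rw [Finset.sum_add_distrib]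
      map_smul' := by
        intro r v
        simp only [Pi.smul_apply, smul_eq_mul, RingHom.id_apply, Finset.mul_sum, mul_assoc] }
  have hφ : ∀ v : ((i : Fin s) × Fin (k i)) → R, φ v = ∑ j, v j * x j := fun v => rfl
  set Mp : Submodule R (((i : Fin s) × Fin (k i)) → R) :=
    Submodule.pi Set.univ (fun j => Ideal.span {γ ^ (j.1 : ℕ)}) with hMp
  have hmem : ∀ v : ((i : Fin s) × Fin (k i)) → R,
      (∀ j, v j ∈ Ideal.span {γ ^ (j.1 : ℕ)}) ↔ v ∈ Mp := by
    intro v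
    rw [hMp, Submodule.mem_pi]
    exact ⟨fun h j _ => h j, fun h j => h j (Set.mem_univ j)⟩
  set F : Finset (((i : Fin s) × Fin (k i)) → R) :=
    Finset.univ.filter (fun v => v ∈ Mp) with hFdef
  have hFmem : ∀ v, v ∈ F ↔ v ∈ Mp := by
    intro v; rw [hFdef, Finset.mem_filter]; simp
  set I : Ideal R := Submodule.map φ Mp with hIdef
  have hI : I ≠ ⊥ := by
    obtain ⟨v, hv1, hv2, hv3⟩ := hx
    intro h
    apply hv3
    have hmem2 : φ v ∈ I := ⟨v, (hmem v).1 hv1, rfl⟩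
    rw [h, Submodule.mem_bot] at hmem2
    rw [← hφ v]
    exact hmem2
  have himg : F.image (fun v => φ v) = (I : Set R).toFinset := by
    ext y
    simp only [Finset.mem_image, Set.mem_toFinset, SetLike.mem_coe, hIdef, Submodule.mem_map]
    constructor
    · rintro ⟨v, hv, rfl⟩; exact ⟨v, (hFmem v).1 hv, rfl⟩
    · rintro ⟨v, hv, rfl⟩; exact ⟨v, (hFmem v).2 hv, rfl⟩
  set Kc := (F.filter (fun v => φ v = 0)).card with hKc
  have hfib : ∀ y ∈ F.image (fun v => φ v),
      (F.filter (fun v => φ v = y)).card = Kc := by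
    intro y hy
    rw [Finset.mem_image] at hy
    obtain ⟨v₀, hv₀F, hv₀⟩ := hy
    rw [hKc]
    apply Finset.card_bij' (fun v _ => v - v₀) (fun w _ => w + v₀)
    · intro v hv
      rw [Finset.mem_filter] at hv ⊢
      refine ⟨(hFmem _).2 (Mp.sub_mem ((hFmem v).1 hv.1) ((hFmem v₀).1 hv₀F)), ?_⟩
      rw [map_sub, hv.2, hv₀, sub_self]
    · intro w hw
      rw [Finset.mem_filter] at hw ⊢
      refine ⟨(hFmem _).2 (Mp.add_mem ((hFmem w).1 hw.1) ((hFmem v₀).1 hv₀F)), ?_⟩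
      rw [map_add, hw.2, hv₀, zero_add]
    · intro v hv; simp
    · intro w hw; simp
  have hIcard := sum_wt_ideal γ s q hs hmax hnil hnil' hq hI
  have h1 : ∑ v ∈ F, wtHom γ s q (φ v) = (Kc : ℚ) * (((I : Set R).toFinset.card : ℕ) : ℚ) := by
    rw [Finset.sum_comp (wtHom γ s q) (fun v => φ v)]
    rw [Finset.sum_congr rfl (fun y hy => by rw [hfib y hy])]
    rw [← Finset.smul_sum, himg, hIcard, nsmul_eq_mul]
  have h2 : F.card = (I : Set R).toFinset.card * Kc := by
    calc F.card = ∑ y ∈ F.image (fun v => φ v), (F.filter fun v => φ v = y).card :=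
          Finset.card_eq_sum_card_image _ F
      _ = ∑ _y ∈ F.image (fun v => φ v), Kc := Finset.sum_congr rfl hfib
      _ = (F.image (fun v => φ v)).card * Kc := by rw [Finset.sum_const, smul_eq_mul]
      _ = (I : Set R).toFinset.card * Kc := by rw [himg]
  have hsum : ∑ v ∈ F, wtHom γ s q (φ v) = (F.card : ℚ) := by
    rw [h1, h2]; push_cast; ring
  have hset : {v : ((i : Fin s) × Fin (k i)) → R |
      (∀ j, v j ∈ Ideal.span {γ ^ (j.1 : ℕ)}) ∧ v ≠ 0} = ↑(F.erase 0) := by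
    ext v
    simp only [Set.mem_setOf_eq, Finset.coe_erase, Set.mem_diff, Finset.mem_coe,
      Set.mem_singleton_iff, hFmem, hmem]
  rw [hset, finsum_mem_coe_finset]
  have h0 : wtHom γ s q (∑ j, (0 : ((i : Fin s) × Fin (k i)) → R) j * x j) = 0 := by
    simp [wtHom]
  rw [Finset.sum_erase F h0]
  have hfun : ∑ v ∈ F, wtHom γ s q (∑ j, v j * x j) = ∑ v ∈ F, wtHom γ s q (φ v) :=
    Finset.sum_congr rfl (fun v _ => by rw [hφ])
  rw [hfun, hsum]
  congr 1
  have hsetF : {v : ((i : Fin s) × Fin (k i)) → R |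
      ∀ j, v j ∈ Ideal.span {γ ^ (j.1 : ℕ)}} = ↑F := by
    ext v
    simp only [Set.mem_setOf_eq, Finset.mem_coe, hFmem, hmem]
  rw [hsetF]
  rw [Finset.coe_sort_coe, Nat.card_eq_finsetCard]
end

section
/- Let R be a finite commutative chain ring with maximal ideal ⟨γ⟩, nilpotency index s, and residue field of size q. Fix nonnegative integers k₀, …, k_{s−1} with K = Σ k_i ≥ 1 and let V = R^{k₀} × ⟨γ⟩^{k₁} × ⋯ × ⟨γ^{s−1}⟩^{k_{s−1}} ⊆ R^K. For v ∈ V let orb(v) = {u·v : u ∈ R^×}. Then the greatest common divisor of the orbit sizes |orb(v)| over all v ∈ V \ {0} equals q − 1; that is, q − 1 divides |orb(v)| for every v ∈ V \ {0}, and there exists v ∈ V \ {0} with |orb(v)| = q − 1. -/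
open scoped BigOperators Classical

/-- The gcd of the `Rˣ`-orbit sizes on `V \ {0}` is `q - 1`: every orbit size is
divisible by `q - 1`, and some orbit has size exactly `q - 1`. -/
theorem orbit_size_gcd {R : Type*} [CommRing R] [IsLocalRing R] [Fintype R]
    (γ : R) (s q : ℕ) (hs : 1 ≤ s)
    (hmax : IsLocalRing.maximalIdeal R = Ideal.span {γ})
    (hnil : γ ^ s = 0) (hnil' : γ ^ (s - 1) ≠ 0)
    (hq : Nat.card (R ⧸ IsLocalRing.maximalIdeal R) = q)
    (k : Fin s → ℕ) (hk : k ≠ 0) :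
    (∀ v : ((i : Fin s) × Fin (k i)) → R,
        (∀ j, v j ∈ Ideal.span {γ ^ (j.1 : ℕ)}) → v ≠ 0 →
        (q - 1) ∣ Nat.card {w : ((i : Fin s) × Fin (k i)) → R | ∃ u : Rˣ, w = (u : R) • v}) ∧
    (∃ v : ((i : Fin s) × Fin (k i)) → R,
        (∀ j, v j ∈ Ideal.span {γ ^ (j.1 : ℕ)}) ∧ v ≠ 0 ∧
        Nat.card {w : ((i : Fin s) × Fin (k i)) → R | ∃ u : Rˣ, w = (u : R) • v} = q - 1) := by
  classical
  set m := IsLocalRing.maximalIdeal R with hm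
  haveI : m.IsMaximal := IsLocalRing.maximalIdeal.isMaximal R
  letI : Field (R ⧸ m) := Ideal.Quotient.field m
  haveI : Finite (R ⧸ m) :=
    Finite.of_surjective (Ideal.Quotient.mk m) Ideal.Quotient.mk_surjective
  set f : Rˣ →* (R ⧸ m)ˣ := Units.map (Ideal.Quotient.mk m : R →+* R ⧸ m) with hf
  -- surjectivity of f
  have hfsurj : Function.Surjective f := by
    intro y
    obtain ⟨x, hx⟩ := Ideal.Quotient.mk_surjective (I := m) (y : R ⧸ m)
    have hxu : IsUnit x := by
      by_contra h
      have hxm : x ∈ m := (IsLocalRing.mem_maximalIdeal x).mpr h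
      have : (y : R ⧸ m) = 0 := by rw [← hx]; exact Ideal.Quotient.eq_zero_iff_mem.mpr hxm
      exact y.ne_zero this
    obtain ⟨u, rfl⟩ := hxu
    exact ⟨u, Units.ext hx⟩
  -- kernel characterization
  have hkermem : ∀ u : Rˣ, u ∈ f.ker ↔ (u : R) - 1 ∈ m := by
    intro u
    rw [MonoidHom.mem_ker]
    constructor
    · intro h
      have h' : Ideal.Quotient.mk m ((u : R) - 1) = 0 := by
        have := congrArg Units.val h
        simp only [hf, Units.coe_map, Units.val_one, MonoidHom.coe_coe] at this
        rw [map_sub, map_one, this, sub_self]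
      exact Ideal.Quotient.eq_zero_iff_mem.mp h'
    · intro h
      apply Units.ext
      have h' : Ideal.Quotient.mk m ((u : R) - 1) = 0 := Ideal.Quotient.eq_zero_iff_mem.mpr h
      rw [map_sub, map_one, sub_eq_zero] at h'
      simpa [hf] using h'
  -- index of kernel is q - 1
  have hker : f.ker.index = q - 1 := by
    rw [Subgroup.index_ker, MonoidHom.range_eq_top_of_surjective f hfsurj]
    rw [Nat.card_congr Subgroup.topEquiv.toEquiv, Nat.card_units, hq]
  -- orbit sets are orbits
  have horb : ∀ v : ((i : Fin s) × Fin (k i)) → R,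
      {w : ((i : Fin s) × Fin (k i)) → R | ∃ u : Rˣ, w = (u : R) • v}
        = MulAction.orbit Rˣ v := by
    intro v; ext w
    constructor
    · rintro ⟨u, rfl⟩; exact ⟨u, rfl⟩
    · rintro ⟨u, rfl⟩; exact ⟨u, rfl⟩
  have hcard : ∀ v : ((i : Fin s) × Fin (k i)) → R,
      Nat.card {w : ((i : Fin s) × Fin (k i)) → R | ∃ u : Rˣ, w = (u : R) • v}
        = (MulAction.stabilizer Rˣ v).index := by
    intro v
    rw [horb v, MulAction.index_stabilizer, Nat.card_coe_set_eq]
  -- stabilizer of a nonzero vector lies in ker f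
  have hstab : ∀ v : ((i : Fin s) × Fin (k i)) → R, v ≠ 0 →
      MulAction.stabilizer Rˣ v ≤ f.ker := by
    intro v hv u hu
    rw [MulAction.mem_stabilizer_iff] at hu
    obtain ⟨j, hj⟩ : ∃ j, v j ≠ 0 := by
      by_contra h; push_neg at h; exact hv (funext h)
    have h1 : ((u : R) - 1) * v j = 0 := by
      have h2 : (u : R) * v j = v j := congrFun hu j
      rw [sub_mul, one_mul, h2, sub_self]
    rw [hkermem]
    by_contra h
    have hunit : IsUnit ((u : R) - 1) := by
      by_contra h'
      exact h ((IsLocalRing.mem_maximalIdeal _).mpr h')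
    exact hj ((hunit.mul_right_eq_zero).mp h1)
  constructor
  · intro v _ hv
    rw [hcard v, ← hker]
    exact Subgroup.index_dvd_of_le (hstab v hv)
  · obtain ⟨i, hi⟩ : ∃ i, k i ≠ 0 := by
      by_contra h; push_neg at h; exact hk (funext h)
    set j0 : (i : Fin s) × Fin (k i) := ⟨i, ⟨0, Nat.pos_of_ne_zero hi⟩⟩ with hj0
    set v : ((i : Fin s) × Fin (k i)) → R := Pi.single j0 (γ ^ (s - 1)) with hv
    have hv0 : v ≠ 0 := by
      intro h
      apply hnil'
      have := congrFun h j0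
      simpa [hv, Pi.single_eq_same] using this
    have hγz : γ ^ (s - 1) * γ = 0 := by
      rw [← pow_succ, show s - 1 + 1 = s by omega]; exact hnil
    refine ⟨v, ?_, hv0, ?_⟩
    · intro j
      rcases eq_or_ne j j0 with rfl | h
      · rw [hv, Pi.single_eq_same]
        exact Ideal.mem_span_singleton.mpr
          (pow_dvd_pow γ (by have := j0.1.isLt; omega))
      · rw [hv, Pi.single_eq_of_ne h]; exact zero_mem _
    · have hstabeq : MulAction.stabilizer Rˣ v = f.ker := by
        apply le_antisymm (hstab v hv0)
        intro u hu
        rw [hkermem] at hu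
        rw [hmax, Ideal.mem_span_singleton] at hu
        obtain ⟨c, hc⟩ := hu
        rw [MulAction.mem_stabilizer_iff]
        funext j
        rcases eq_or_ne j j0 with rfl | h
        · show (u : R) • v j0 = v j0
          rw [hv, Pi.single_eq_same, smul_eq_mul]
          linear_combination γ ^ (s - 1) * hc + c * hγz
        · show (u : R) • v j = v j
          rw [hv, Pi.single_eq_of_ne h]
          simp
      rw [hcard v, hstabeq, hker]
end

section
/- Let R be a finite commutative chain ring with maximal ideal ⟨γ⟩, nilpotency index s, and residue field of size q, and set M = q/(q−1). For n ≥ 1 and a real number d ≥ 0, let B_R(n, d) = max{|C| : C ⊆ R^n a linear code with d_Hom(C) ≥ d}, where by convention d_Hom({0}) = M·(n+1), and for δ ≥ 0 define β_R(δ) = limsup_{n→∞} (1/n)·log_{|R|}(B_R(n, δn)). Then for every δ with 0 ≤ δ ≤ q/(q−1), β_R(δ) ≤ 1 − ((q−1)/q)·δ. -/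
open scoped BigOperators Classical

/-- `BmaxHom γ s q n d` is the largest cardinality of a linear code `C ⊆ R^n` whose
minimum homogeneous distance is at least `d`. -/
noncomputable def BmaxHom {R : Type*} [CommRing R] [Fintype R] (γ : R) (s q : ℕ)
    (n : ℕ) (d : ℝ) : ℕ :=
  sSup {N : ℕ | ∃ C : Submodule R (Fin n → R),
    (∀ c ∈ C, c ≠ 0 → d ≤ ((wtHomV γ s q c : ℚ) : ℝ)) ∧ Nat.card C = N}

section Aux

variable {R : Type*} [CommRing R]

lemma wtHom_le {γ : R} {s q : ℕ} (hq : 2 ≤ q) (x : R) :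
    wtHom γ s q x ≤ (q : ℚ) / ((q : ℚ) - 1) := by
  have hq1 : (0 : ℚ) < (q : ℚ) - 1 := by
    have : (2 : ℚ) ≤ (q : ℚ) := by exact_mod_cast hq
    linarith
  have h1 : (1 : ℚ) ≤ (q : ℚ) / ((q : ℚ) - 1) := by
    rw [le_div_iff₀ hq1]; linarith
  unfold wtHom
  split_ifs <;> linarith

lemma hWt_le {n : ℕ} (v : Fin n → R) : hWt v ≤ n := by
  have : Nat.card {i : Fin n // v i ≠ 0} ≤ Nat.card (Fin n) :=
    Nat.card_le_card_of_injective _ Subtype.val_injective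
  simpa [hWt] using this

lemma wtHomV_le {γ : R} {s q : ℕ} (hq : 2 ≤ q) {n : ℕ} (v : Fin n → R) :
    wtHomV γ s q v ≤ ((q : ℚ) / ((q : ℚ) - 1)) * (hWt v : ℚ) := by
  classical
  have hrw : wtHomV γ s q v
      = ∑ i ∈ Finset.univ.filter (fun i => v i ≠ 0), wtHom γ s q (v i) := by
    rw [wtHomV]
    exact (Finset.sum_filter_of_ne (by
      intro i _ h hvi
      exact h (by simp [wtHom, hvi]))).symm
  have hcard : (Finset.univ.filter (fun i => v i ≠ 0)).card = hWt v := by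
    rw [hWt, Nat.card_eq_fintype_card, Fintype.card_subtype]
  calc wtHomV γ s q v
      = ∑ i ∈ Finset.univ.filter (fun i => v i ≠ 0), wtHom γ s q (v i) := hrw
    _ ≤ (Finset.univ.filter (fun i => v i ≠ 0)).card • ((q : ℚ) / ((q : ℚ) - 1)) :=
        Finset.sum_le_card_nsmul _ _ _ (fun i _ => wtHom_le hq (v i))
    _ = ((q : ℚ) / ((q : ℚ) - 1)) * (hWt v : ℚ) := by
        rw [hcard, nsmul_eq_mul, mul_comm]

variable [Fintype R]

/-- Singleton bound for the Hamming weight. -/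
lemma card_le_of_hWt {n : ℕ} (C : Submodule R (Fin n → R)) (t : ℕ)
    (h : ∀ c ∈ C, c ≠ 0 → t ≤ hWt c) :
    Nat.card C ≤ Fintype.card R ^ (n - (t - 1)) := by
  classical
  by_cases htn : t - 1 ≤ n
  · -- project onto the coordinates `≥ t-1`
    set f : C → (Fin (n - (t - 1)) → R) :=
      fun c j => (c : Fin n → R) ⟨t - 1 + j.val, by omega⟩ with hf
    have hinj : Function.Injective f := by
      intro c c' hcc'
      by_contra hne
      set d : Fin n → R := (c : Fin n → R) - (c' : Fin n → R) with hd
      have hdC : d ∈ C := C.sub_mem c.2 c'.2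
      have hd0 : d ≠ 0 := by
        intro h0
        exact hne (Subtype.ext (sub_eq_zero.mp h0))
      have hsupp : ∀ i : Fin n, d i ≠ 0 → i.val < t - 1 := by
        intro i hi
        by_contra hge
        push_neg at hge
        apply hi
        have hj := congrFun hcc' ⟨i.val - (t - 1), by omega⟩
        have heq : (⟨t - 1 + (i.val - (t - 1)), by omega⟩ : Fin n) = i := by
          apply Fin.ext; simp; omega
        simp only [hf, heq] at hj
        simp [hd, hj]
      have hle : hWt d ≤ t - 1 := by
        have : Nat.card {i : Fin n // d i ≠ 0} ≤ Nat.card (Fin (t - 1)) := by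
          apply Nat.card_le_card_of_injective
            (fun i => (⟨i.1.val, hsupp i.1 i.2⟩ : Fin (t - 1)))
          intro i1 i2 h12
          apply Subtype.ext; apply Fin.ext
          simpa [Fin.ext_iff] using h12
        simpa [hWt] using this
      have ht := h d hdC hd0
      have ht0 : t = 0 := by omega
      obtain ⟨i, hi⟩ := Function.ne_iff.mp hd0
      have := hsupp i (by simpa using hi)
      omega
    calc Nat.card C ≤ Nat.card (Fin (n - (t - 1)) → R) :=
          Nat.card_le_card_of_injective f hinj
      _ = Fintype.card R ^ (n - (t - 1)) := by
          rw [Nat.card_eq_fintype_card, Fintype.card_fun, Fintype.card_fin]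
  · -- then every codeword is zero
    have hsub : ∀ c : C, c = 0 := by
      intro c
      by_contra hc
      have h1 := h c c.2 (fun h0 => hc (Subtype.ext h0))
      have h2 := hWt_le (c : Fin n → R)
      omega
    have : Nat.card C ≤ 1 := by
      haveI : Unique C := ⟨⟨0⟩, fun a => hsub a⟩
      exact le_of_eq Nat.card_unique
    calc Nat.card C ≤ 1 := this
      _ ≤ Fintype.card R ^ (n - (t - 1)) := Nat.one_le_pow _ _ Fintype.card_pos

lemma bmaxHom_bddAbove (γ : R) (s q n : ℕ) (d : ℝ) :
    ∀ N ∈ {N : ℕ | ∃ C : Submodule R (Fin n → R),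
      (∀ c ∈ C, c ≠ 0 → d ≤ ((wtHomV γ s q c : ℚ) : ℝ)) ∧ Nat.card C = N},
      N ≤ Fintype.card R ^ n := by
  rintro N ⟨C, -, rfl⟩
  calc Nat.card C ≤ Nat.card (Fin n → R) :=
        Nat.card_le_card_of_injective _ Subtype.val_injective
    _ = Fintype.card R ^ n := by
        rw [Nat.card_eq_fintype_card, Fintype.card_fun, Fintype.card_fin]

lemma one_le_bmaxHom (γ : R) (s q n : ℕ) (d : ℝ) : 1 ≤ BmaxHom γ s q n d := by
  apply le_csSup ⟨Fintype.card R ^ n, fun N hN => bmaxHom_bddAbove γ s q n d N hN⟩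
  refine ⟨⊥, fun c hc hc0 => absurd hc (by simpa using hc0), ?_⟩
  exact Nat.card_eq_one_iff_unique.mpr ⟨⟨fun a b => Subtype.ext (by
    have ha := a.2; have hb := b.2
    simp only [Submodule.mem_bot] at ha hb
    rw [ha, hb])⟩, ⟨0⟩⟩

lemma bmaxHom_le {γ : R} {s q : ℕ} (hq : 2 ≤ q) (n : ℕ) (d : ℝ) :
    BmaxHom γ s q n d ≤
      Fintype.card R ^ (n - (⌈((q : ℝ) - 1) / (q : ℝ) * d⌉₊ - 1)) := by
  apply csSup_le
  · exact ⟨1, ⊥, fun c hc hc0 => absurd hc (by simpa using hc0),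
      Nat.card_eq_one_iff_unique.mpr ⟨⟨fun a b => Subtype.ext (by
        have ha := a.2; have hb := b.2
        simp only [Submodule.mem_bot] at ha hb
        rw [ha, hb])⟩, ⟨0⟩⟩⟩
  rintro N ⟨C, hC, rfl⟩
  apply card_le_of_hWt C _ ?_
  intro c hc hc0
  have hq1 : (0 : ℝ) < (q : ℝ) - 1 := by
    have : (2 : ℝ) ≤ (q : ℝ) := by exact_mod_cast hq
    linarith
  have hq0 : (0 : ℝ) < (q : ℝ) := by linarith
  have h1 : d ≤ ((wtHomV γ s q c : ℚ) : ℝ) := hC c hc hc0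
  have h2 : ((wtHomV γ s q c : ℚ) : ℝ) ≤ (q : ℝ) / ((q : ℝ) - 1) * (hWt c : ℝ) := by
    have := wtHomV_le (γ := γ) (s := s) hq c
    have hcast : (((((q : ℚ) / ((q : ℚ) - 1)) * (hWt c : ℚ)) : ℚ) : ℝ)
        = (q : ℝ) / ((q : ℝ) - 1) * (hWt c : ℝ) := by push_cast; ring
    calc ((wtHomV γ s q c : ℚ) : ℝ) ≤ _ := by exact_mod_cast this
      _ = _ := hcast
  rw [Nat.ceil_le]
  have hd : d ≤ (q : ℝ) / ((q : ℝ) - 1) * (hWt c : ℝ) := le_trans h1 h2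
  have : ((q : ℝ) - 1) / (q : ℝ) * d
      ≤ ((q : ℝ) - 1) / (q : ℝ) * ((q : ℝ) / ((q : ℝ) - 1) * (hWt c : ℝ)) := by
    apply mul_le_mul_of_nonneg_left hd (by positivity)
  calc ((q : ℝ) - 1) / (q : ℝ) * d ≤ _ := this
    _ = (hWt c : ℝ) := by field_simp

end Aux

/-- Asymptotic Singleton bound in the homogeneous metric:
`β_R(δ) ≤ 1 - ((q-1)/q)·δ` for `0 ≤ δ ≤ q/(q-1)`. -/
theorem asymptotic_singleton_bound {R : Type*} [CommRing R] [IsLocalRing R] [Fintype R]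
    (γ : R) (s q : ℕ) (hs : 1 ≤ s)
    (hmax : IsLocalRing.maximalIdeal R = Ideal.span {γ})
    (hnil : γ ^ s = 0) (hnil' : γ ^ (s - 1) ≠ 0)
    (hq : Nat.card (R ⧸ IsLocalRing.maximalIdeal R) = q)
    (δ : ℝ) (hδ0 : 0 ≤ δ) (hδ1 : δ ≤ (q : ℝ) / ((q : ℝ) - 1)) :
    Filter.limsup (fun n : ℕ => (1 / (n : ℝ)) *
        Real.logb (Fintype.card R) (BmaxHom γ s q n (δ * n))) Filter.atTop
      ≤ 1 - ((q : ℝ) - 1) / (q : ℝ) * δ := by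
  classical
  -- basic facts
  have hq2 : 2 ≤ q := by
    rw [← hq]
    have : Nontrivial (R ⧸ IsLocalRing.maximalIdeal R) :=
      Ideal.Quotient.nontrivial_iff.mpr (Ideal.IsMaximal.ne_top inferInstance)
    exact Finite.one_lt_card
  have hq1R : (0 : ℝ) < (q : ℝ) - 1 := by
    have : (2 : ℝ) ≤ (q : ℝ) := by exact_mod_cast hq2
    linarith
  have hq0R : (0 : ℝ) < (q : ℝ) := by linarith
  have hKR : (1 : ℝ) < (Fintype.card R : ℝ) := by
    exact_mod_cast Fintype.one_lt_card
  set c : ℝ := ((q : ℝ) - 1) / (q : ℝ) with hc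
  have hc0 : 0 ≤ c := by positivity
  have hcδ : c * δ ≤ 1 := by
    have := mul_le_mul_of_nonneg_left hδ1 hc0
    calc c * δ ≤ c * ((q : ℝ) / ((q : ℝ) - 1)) := this
      _ = 1 := by rw [hc]; field_simp
  set f : ℕ → ℝ := fun n => (1 / (n : ℝ)) *
    Real.logb (Fintype.card R) (BmaxHom γ s q n (δ * n)) with hfdef
  set g : ℕ → ℝ := fun n => 1 - c * δ + 1 / (n : ℝ) with hgdef
  -- pointwise bound
  have hbound : ∀ n : ℕ, 1 ≤ n → f n ≤ g n := by
    intro n hn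
    have hnR : (0 : ℝ) < (n : ℝ) := by exact_mod_cast hn
    set t : ℕ := ⌈c * (δ * n)⌉₊ with ht
    have hB1 : (1 : ℝ) ≤ (BmaxHom γ s q n (δ * n) : ℝ) := by
      exact_mod_cast one_le_bmaxHom γ s q n (δ * n)
    have hBle' : BmaxHom γ s q n (δ * n) ≤ Fintype.card R ^ (n - (t - 1)) := by
      rw [ht, hc]
      exact bmaxHom_le hq2 n (δ * n)
    have hBle : (BmaxHom γ s q n (δ * n) : ℝ)
        ≤ (Fintype.card R : ℝ) ^ (n - (t - 1)) := by
      exact_mod_cast hBle'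
    have hlog : Real.logb (Fintype.card R) (BmaxHom γ s q n (δ * n))
        ≤ ((n - (t - 1) : ℕ) : ℝ) := by
      calc Real.logb (Fintype.card R) (BmaxHom γ s q n (δ * n))
          ≤ Real.logb (Fintype.card R) ((Fintype.card R : ℝ) ^ (n - (t - 1))) := by
            apply (Real.logb_le_logb hKR (by linarith) (by positivity)).mpr hBle
        _ = ((n - (t - 1) : ℕ) : ℝ) := by
            rw [Real.logb_pow, Real.logb_self_eq_one hKR, mul_one]
    have hkey : ((n - (t - 1) : ℕ) : ℝ) ≤ (n : ℝ) - c * (δ * (n : ℝ)) + 1 := by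
      have h1 : c * (δ * n) ≤ (t : ℝ) := Nat.le_ceil _
      have h2 : c * (δ * n) ≤ (n : ℝ) := by
        calc c * (δ * n) = (c * δ) * n := by ring
          _ ≤ 1 * n := mul_le_mul_of_nonneg_right hcδ (le_of_lt hnR)
          _ = (n : ℝ) := one_mul _
      rcases le_or_gt (t - 1) n with h | h
      · have hcast : ((n - (t - 1) : ℕ) : ℝ) = (n : ℝ) - ((t - 1 : ℕ) : ℝ) := by
          exact Nat.cast_sub h
        have hpred : (t : ℝ) - 1 ≤ ((t - 1 : ℕ) : ℝ) := by
          rcases Nat.eq_zero_or_pos t with h0 | h0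
          · simp [h0]
          · rw [Nat.cast_sub h0]; simp
        rw [hcast]
        linarith
      · have : n - (t - 1) = 0 := by omega
        rw [this]
        simp only [Nat.cast_zero]
        linarith
    have hfn : f n ≤ (1 / (n : ℝ)) * ((n : ℝ) - c * (δ * (n : ℝ)) + 1) := by
      apply mul_le_mul_of_nonneg_left (le_trans hlog hkey) (by positivity)
    calc f n ≤ (1 / (n : ℝ)) * ((n : ℝ) - c * (δ * (n : ℝ)) + 1) := hfn
      _ = 1 - c * δ + 1 / (n : ℝ) := by field_simp
      _ = g n := rfl
  -- limsup comparison
  have hglim : Filter.Tendsto g Filter.atTop (nhds (1 - c * δ)) := by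
    have h1 : Filter.Tendsto (fun n : ℕ => 1 / (n : ℝ)) Filter.atTop (nhds 0) :=
      tendsto_one_div_atTop_nhds_zero_nat
    have := Filter.Tendsto.add (tendsto_const_nhds (x := 1 - c * δ)) h1
    simpa [hgdef] using this
  have hfg : f ≤ᶠ[Filter.atTop] g :=
    Filter.eventually_atTop.mpr ⟨1, hbound⟩
  have hfcobdd : Filter.IsCoboundedUnder (· ≤ ·) Filter.atTop f := by
    apply Filter.IsBoundedUnder.isCoboundedUnder_le (α := ℝ)
    refine ⟨0, Filter.eventually_map.mpr ?_⟩
    filter_upwards with n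
    have hB1 : (1 : ℝ) ≤ (BmaxHom γ s q n (δ * n) : ℝ) := by
      exact_mod_cast one_le_bmaxHom γ s q n (δ * n)
    have : 0 ≤ Real.logb (Fintype.card R) (BmaxHom γ s q n (δ * n)) :=
      Real.logb_nonneg hKR hB1
    have hn0 : (0 : ℝ) ≤ 1 / (n : ℝ) := by positivity
    exact mul_nonneg hn0 this
  have hgbdd : Filter.IsBoundedUnder (· ≤ ·) Filter.atTop g :=
    hglim.isBoundedUnder_le
  calc Filter.limsup f Filter.atTop ≤ Filter.limsup g Filter.atTop :=
        Filter.limsup_le_limsup hfg hfcobdd hgbdd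
    _ = 1 - c * δ := hglim.limsup_eq
end
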